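/- arXiv:2201.09017 — 8 statements merged into one kernel-verified Lean document; each statement's English description precedes it below -/
import Mathlib

section
/- Let N : ℕ, let B be a subgroup of ℤ^N, and let γ ∈ ℤ^N be such that S(γ) = {v ∈ B : v_i + γ_i ≥ 0 for all i} is finite. If α ∈ ℤ^N satisfies ∑_i α_i v_i = 0 for every v ∈ B (α is orthogonal to the lattice B), then ∑_{i=1}^N α_i X_i ∂F_γ/∂X_i = (∑_{i=1}^N α_i γ_i) · F_γ (the first Gelfand–Kapranov–Zelevinsky equation). -/
open MvPolynomial

/-- The Γ-series `F_γ` attached to a lattice `B ⊆ ℤ^N` and a shift vector `γ ∈ ℤ^N`: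
`F_γ = ∑_{v ∈ B, v + γ ≥ 0} ∏ i, X i ^ (v+γ)_i / ((v+γ)_i)!`
(a finite sum under the finiteness hypothesis; `∑ᶠ` is `0` on infinite supports). -/
noncomputable def gammaSeries (N : ℕ) (B : AddSubgroup (Fin N → ℤ)) (γ : Fin N → ℤ) :
    MvPolynomial (Fin N) ℂ :=
  ∑ᶠ v ∈ {v : Fin N → ℤ | v ∈ B ∧ ∀ i, 0 ≤ v i + γ i},
    C ((∏ i, ((v i + γ i).toNat.factorial : ℂ))⁻¹) * ∏ i, X i ^ (v i + γ i).toNat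


lemma gkz_aux_prodX {N : ℕ} (k : Fin N → ℕ) (c : ℂ) :
    C c * ∏ i, X i ^ k i = monomial (Finsupp.equivFunOnFinite.symm k) c := by
  rw [monomial_eq]
  congr 1
  rw [Finsupp.prod_fintype]
  · simp
  · intro i; simp

lemma gkz_aux_term {N : ℕ} (i : Fin N) (c a : ℂ) (s : Fin N →₀ ℕ) :
    C c * X i * pderiv i (monomial s a) = monomial s (c * a * s i) := by
  rw [pderiv_monomial]
  by_cases h : s i = 0
  · simp [h]
  · have hle : Finsupp.single i 1 ≤ s := by
      rw [Finsupp.single_le_iff]; omega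
    rw [mul_assoc, ← pow_one (X i : MvPolynomial (Fin N) ℂ), ← monomial_single_add,
      add_tsub_cancel_of_le hle, C_mul_monomial, mul_assoc]

/-- The first Gelfand–Kapranov–Zelevinsky equation: if `α ∈ ℤ^N` is orthogonal to the
lattice `B`, then `∑ i, α i • X i • ∂F_γ/∂X i = (∑ i, α i γ i) • F_γ`. -/
theorem gammaSeries_gkz_one (N : ℕ) (B : AddSubgroup (Fin N → ℤ)) (γ : Fin N → ℤ)
    (hfin : {v : Fin N → ℤ | v ∈ B ∧ ∀ i, 0 ≤ v i + γ i}.Finite) (α : Fin N → ℤ)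
    (hα : ∀ v ∈ B, ∑ i, α i * v i = 0) :
    ∑ i, C ((α i : ℂ)) * X i * pderiv i (gammaSeries N B γ) =
      C ((∑ i, α i * γ i : ℤ) : ℂ) * gammaSeries N B γ := by
  classical
  rw [gammaSeries, finsum_mem_eq_finite_toFinset_sum _ hfin]
  simp only [map_sum, Finset.mul_sum]
  rw [Finset.sum_comm]
  refine Finset.sum_congr rfl fun v hv => ?_
  rw [Set.Finite.mem_toFinset] at hv
  obtain ⟨hvB, hvpos⟩ := hv
  set c : ℂ := (∏ i, ((v i + γ i).toNat.factorial : ℂ))⁻¹ with hc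
  set s : Fin N →₀ ℕ := Finsupp.equivFunOnFinite.symm (fun i => (v i + γ i).toNat) with hs
  have hconv : C c * ∏ i, X i ^ (v i + γ i).toNat = monomial s c := gkz_aux_prodX _ _
  rw [hconv]
  have hterm : ∀ i, C ((α i : ℂ)) * X i * pderiv i (monomial s c)
      = monomial s ((α i : ℂ) * c * s i) := fun i => gkz_aux_term i _ c s
  simp only [hterm]
  rw [← map_sum, C_mul_monomial]
  congr 1
  have hsi : ∀ i, ((s i : ℂ)) = ((v i + γ i : ℤ) : ℂ) := by
    intro i
    have : s i = (v i + γ i).toNat := by simp [hs, Finsupp.equivFunOnFinite]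
    rw [this, ← Int.toNat_of_nonneg (hvpos i)]
    norm_cast
  calc ∑ i, (α i : ℂ) * c * s i = (∑ i, (α i : ℂ) * ((v i + γ i : ℤ) : ℂ)) * c := by
        rw [Finset.sum_mul]; exact Finset.sum_congr rfl fun i _ => by rw [hsi i]; ring
    _ = ((∑ i, α i * γ i : ℤ) : ℂ) * c := by
        congr 1
        push_cast
        have h0 : (∑ i, (α i : ℂ) * (v i : ℂ)) = 0 := by
          exact_mod_cast congrArg (Int.cast : ℤ → ℂ) (hα v hvB)
        calc ∑ i, (α i : ℂ) * ((v i : ℂ) + (γ i : ℂ))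
            = (∑ i, (α i : ℂ) * (v i : ℂ)) + ∑ i, (α i : ℂ) * (γ i : ℂ) := by
              rw [← Finset.sum_add_distrib]
              exact Finset.sum_congr rfl fun i _ => by ring
          _ = ∑ i, (α i : ℂ) * (γ i : ℂ) := by rw [h0, zero_add]
end

section
/- Let N : ℕ, let B be a subgroup of ℤ^N, and let γ ∈ ℤ^N be such that S(γ) = {v ∈ B : v_i + γ_i ≥ 0 for all i} is finite. If v ∈ B is written as v = v₊ − v₋ with v₊, v₋ ∈ ℤ^N having all coordinates nonnegative, then ∂^{v₊} F_γ = ∂^{v₋} F_γ, where ∂^{w} denotes the composite ∏_i (∂/∂X_i)^{w_i} (the second Gelfand–Kapranov–Zelevinsky equation). -/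
open MvPolynomial

lemma pderiv_comm {N : ℕ} (i j : Fin N) (p : MvPolynomial (Fin N) ℂ) :
    pderiv i (pderiv j p) = pderiv j (pderiv i p) := by
  induction p using MvPolynomial.induction_on with
  | C a => simp
  | add p q hp hq => simp [hp, hq]
  | mul_X p k hp =>
      by_cases hik : i = k <;> by_cases hjk : j = k <;>
        simp_all [pderiv_mul, pderiv_X, Pi.single_apply, mul_comm, add_comm]

/-- The composite partial derivative `∂^w = ∏ i, (∂/∂X_i)^(w i)`, as an endomorphism of
the polynomial ring (the partial derivatives pairwise commute). -/
noncomputable def iterPDeriv (N : ℕ) (w : Fin N → ℕ) :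
    Module.End ℂ (MvPolynomial (Fin N) ℂ) :=
  Finset.univ.noncommProd
    (fun i => ((pderiv i).toLinearMap : Module.End ℂ (MvPolynomial (Fin N) ℂ)) ^ (w i))
    (fun i _ j _ _ =>
      Commute.pow_pow (LinearMap.ext fun p => pderiv_comm i j p) (w i) (w j))


/-- normalized monomial -/
noncomputable def mono {N : ℕ} (a : Fin N → ℕ) : MvPolynomial (Fin N) ℂ :=
  C ((∏ i, ((a i).factorial : ℂ))⁻¹) * ∏ i, X i ^ a i

lemma mono_eq {N : ℕ} (a : Fin N → ℕ) :
    mono a = monomial (Finsupp.equivFunOnFinite.symm a)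
      ((∏ i, ((a i).factorial : ℂ))⁻¹) := by
  rw [monomial_eq, Finsupp.prod_fintype]
  · simp [mono]
  · intro i; simp

lemma prod_fact_ne_zero {N : ℕ} (a : Fin N → ℕ) : (∏ i, ((a i).factorial : ℂ)) ≠ 0 := by
  refine Finset.prod_ne_zero_iff.2 fun i _ => ?_
  exact_mod_cast (a i).factorial_ne_zero

lemma pderiv_mono {N : ℕ} (a : Fin N → ℕ) (i : Fin N) :
    pderiv i (mono a) =
      if a i = 0 then 0 else mono (Function.update a i (a i - 1)) := by
  rw [mono_eq, pderiv_monomial]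
  by_cases h : a i = 0
  · simp [h]
  · rw [if_neg h, mono_eq]
    have h1 : Finsupp.equivFunOnFinite.symm a - Finsupp.single i 1 =
        Finsupp.equivFunOnFinite.symm (Function.update a i (a i - 1)) := by
      ext j
      rcases eq_or_ne j i with rfl | hj
      · simp [Finsupp.tsub_apply]
      · simp [Finsupp.tsub_apply, Finsupp.single_apply, Function.update_apply, hj, Ne.symm hj]
    rw [h1]
    congr 1
    have hupd : (fun j => (((Function.update a i (a i - 1)) j).factorial : ℂ)) =
        Function.update (fun j => ((a j).factorial : ℂ)) i (((a i - 1).factorial : ℂ)) := by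
      funext j
      by_cases hj : j = i <;> simp [Function.update_apply, hj]
    have h2 : ∏ j, (((Function.update a i (a i - 1)) j).factorial : ℂ) =
        ((a i - 1).factorial : ℂ) * ∏ j ∈ Finset.univ.erase i, ((a j).factorial : ℂ) := by
      rw [hupd]
      rw [Finset.prod_update_of_mem (Finset.mem_univ i)]
      simp [Finset.sdiff_singleton_eq_erase]
    have h3 : ∏ j, ((a j).factorial : ℂ) =
        ((a i).factorial : ℂ) * ∏ j ∈ Finset.univ.erase i, ((a j).factorial : ℂ) := by
      rw [← Finset.mul_prod_erase Finset.univ _ (Finset.mem_univ i)]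
    have hfact : ((a i).factorial : ℂ) = (a i : ℂ) * ((a i - 1).factorial : ℂ) := by
      exact_mod_cast (Nat.mul_factorial_pred h).symm
    have hR : (∏ j ∈ Finset.univ.erase i, ((a j).factorial : ℂ)) ≠ 0 := by
      refine Finset.prod_ne_zero_iff.2 fun j _ => ?_
      exact_mod_cast (a j).factorial_ne_zero
    have hai : (a i : ℂ) ≠ 0 := by exact_mod_cast h
    have hfne : ∀ n : ℕ, ((n.factorial : ℂ)) ≠ 0 := fun n => by
      exact_mod_cast n.factorial_ne_zero
    rw [h2, h3, hfact]
    field_simp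
    rfl

lemma pderiv_pow_mono {N : ℕ} (a : Fin N → ℕ) (i : Fin N) (k : ℕ) :
    (((pderiv i).toLinearMap : Module.End ℂ (MvPolynomial (Fin N) ℂ)) ^ k) (mono a) =
      if k ≤ a i then mono (Function.update a i (a i - k)) else 0 := by
  induction k with
  | zero => simp
  | succ k ih =>
    rw [pow_succ', Module.End.mul_apply, ih]
    by_cases hk : k ≤ a i
    · rw [if_pos hk]
      have : ((pderiv i).toLinearMap : Module.End ℂ (MvPolynomial (Fin N) ℂ))
          (mono (Function.update a i (a i - k))) =
          pderiv i (mono (Function.update a i (a i - k))) := rfl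
      rw [this, pderiv_mono]
      by_cases hk' : k + 1 ≤ a i
      · have hne : ¬ Function.update a i (a i - k) i = 0 := by
          rw [Function.update_self]; omega
        rw [if_neg hne, if_pos hk', Function.update_self, Function.update_idem]
        have harith : a i - k - 1 = a i - (k + 1) := by omega
        rw [harith]
      · have he : Function.update a i (a i - k) i = 0 := by
          rw [Function.update_self]; omega
        rw [if_pos he, if_neg hk']
    · rw [if_neg hk, if_neg (by omega), map_zero]

lemma commfact {N : ℕ} (w : Fin N → ℕ) (i j : Fin N) :
    Commute (((pderiv i).toLinearMap : Module.End ℂ (MvPolynomial (Fin N) ℂ)) ^ (w i))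
      (((pderiv j).toLinearMap : Module.End ℂ (MvPolynomial (Fin N) ℂ)) ^ (w j)) :=
  Commute.pow_pow (LinearMap.ext fun p => pderiv_comm i j p) (w i) (w j)

lemma noncommProd_pderiv_mono {N : ℕ} (w a : Fin N → ℕ) (s : Finset (Fin N)) :
    (s.noncommProd
      (fun i => ((pderiv i).toLinearMap : Module.End ℂ (MvPolynomial (Fin N) ℂ)) ^ (w i))
      (fun i _ j _ _ => commfact w i j)) (mono a) =
    if ∀ i ∈ s, w i ≤ a i then
      mono (fun i => if i ∈ s then a i - w i else a i) else 0 := by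
  classical
  induction s using Finset.induction_on with
  | empty => erw [Finset.noncommProd_empty]; simp
  | @insert j s hj ih =>
    erw [Finset.noncommProd_insert_of_notMem _ _ _ _ hj, Module.End.mul_apply, ih]
    by_cases hs : ∀ i ∈ s, w i ≤ a i
    · rw [if_pos hs]
      set a' : Fin N → ℕ := fun i => if i ∈ s then a i - w i else a i with ha'
      have ha'j : a' j = a j := by simp [ha', hj]
      by_cases hwj : w j ≤ a j
      · have hcond : ∀ i ∈ insert j s, w i ≤ a i := by
          intro i hi
          rcases Finset.mem_insert.1 hi with rfl | hi
          · exact hwj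
          · exact hs i hi
        rw [pderiv_pow_mono, if_pos (by rw [ha'j]; exact hwj), if_pos hcond]
        congr 1
        funext i
        rcases eq_or_ne i j with rfl | hij
        · simp [Function.update_self, ha'j, Finset.mem_insert]
        · simp [Function.update_of_ne hij, ha', Finset.mem_insert, hij]
      · have hcond : ¬ ∀ i ∈ insert j s, w i ≤ a i := by
          intro hc; exact hwj (hc j (Finset.mem_insert_self j s))
        rw [pderiv_pow_mono, if_neg (by rw [ha'j]; exact hwj), if_neg hcond]
    · rw [if_neg hs, map_zero, if_neg]
      intro hc
      exact hs fun i hi => hc i (Finset.mem_insert_of_mem hi)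


lemma iterPDeriv_mono {N : ℕ} (w a : Fin N → ℕ) :
    iterPDeriv N w (mono a) =
      if ∀ i, w i ≤ a i then mono (fun i => a i - w i) else 0 := by
  rw [iterPDeriv, noncommProd_pderiv_mono w a Finset.univ]
  simp

lemma gammaSeries_eq_sum {N : ℕ} (B : AddSubgroup (Fin N → ℤ)) (γ : Fin N → ℤ)
    (hfin : {v : Fin N → ℤ | v ∈ B ∧ ∀ i, 0 ≤ v i + γ i}.Finite) :
    gammaSeries N B γ = ∑ v ∈ hfin.toFinset, mono (fun i => (v i + γ i).toNat) := by
  rw [gammaSeries]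
  exact finsum_mem_eq_finite_toFinset_sum _ hfin

lemma iterPDeriv_gamma {N : ℕ} (B : AddSubgroup (Fin N → ℤ)) (γ : Fin N → ℤ)
    (hfin : {v : Fin N → ℤ | v ∈ B ∧ ∀ i, 0 ≤ v i + γ i}.Finite)
    (w : Fin N → ℤ) (hw : ∀ i, 0 ≤ w i) :
    iterPDeriv N (fun i => (w i).toNat) (gammaSeries N B γ) =
      ∑ v ∈ hfin.toFinset.filter (fun v => ∀ i, w i ≤ v i + γ i),
        mono (fun i => (v i + γ i - w i).toNat) := by
  classical
  rw [gammaSeries_eq_sum B γ hfin, map_sum, Finset.sum_filter]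
  refine Finset.sum_congr rfl fun v hv => ?_
  have hv' : ∀ i, 0 ≤ v i + γ i := ((hfin.mem_toFinset.1 hv)).2
  rw [iterPDeriv_mono]
  by_cases hQ : ∀ i, w i ≤ v i + γ i
  · rw [if_pos (fun i => by have := hQ i; have := hw i; have := hv' i; omega),
      if_pos hQ]
    congr 1
    funext i
    have := hQ i; have := hw i; have := hv' i
    omega
  · rw [if_neg, if_neg hQ]
    intro hc
    exact hQ fun i => by have := hc i; have := hw i; have := hv' i; omega

/-- The second Gelfand–Kapranov–Zelevinsky equation: if `v = v₊ − v₋ ∈ B` with `v₊, v₋`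
having nonnegative coordinates, then `∂^{v₊} F_γ = ∂^{v₋} F_γ`. -/
theorem gammaSeries_gkz_two (N : ℕ) (B : AddSubgroup (Fin N → ℤ)) (γ : Fin N → ℤ)
    (hfin : {v : Fin N → ℤ | v ∈ B ∧ ∀ i, 0 ≤ v i + γ i}.Finite)
    (vplus vminus : Fin N → ℤ) (hplus : ∀ i, 0 ≤ vplus i) (hminus : ∀ i, 0 ≤ vminus i)
    (hv : vplus - vminus ∈ B) :
    iterPDeriv N (fun i => (vplus i).toNat) (gammaSeries N B γ) =
      iterPDeriv N (fun i => (vminus i).toNat) (gammaSeries N B γ) := by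
  classical
  rw [iterPDeriv_gamma B γ hfin vplus hplus, iterPDeriv_gamma B γ hfin vminus hminus]
  refine Finset.sum_nbij' (fun v => v - vplus + vminus) (fun v => v - vminus + vplus)
    ?_ ?_ ?_ ?_ ?_
  · intro v hvmem
    rw [Finset.mem_filter] at hvmem ⊢
    obtain ⟨hvT, hvQ⟩ := hvmem
    rw [Set.Finite.mem_toFinset] at hvT ⊢
    obtain ⟨hvB, hvpos⟩ := hvT
    have hmem : v - vplus + vminus ∈ B := by
      have : v - vplus + vminus = v - (vplus - vminus) := by abel
      rw [this]
      exact sub_mem hvB hv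
    refine ⟨⟨hmem, fun i => ?_⟩, fun i => ?_⟩
    · have := hvQ i; have := hminus i
      simp only [Pi.add_apply, Pi.sub_apply]
      omega
    · have := hvQ i; have := hminus i
      simp only [Pi.add_apply, Pi.sub_apply]
      omega
  · intro v hvmem
    rw [Finset.mem_filter] at hvmem ⊢
    obtain ⟨hvT, hvQ⟩ := hvmem
    rw [Set.Finite.mem_toFinset] at hvT ⊢
    obtain ⟨hvB, hvpos⟩ := hvT
    have hmem : v - vminus + vplus ∈ B := by
      have : v - vminus + vplus = v + (vplus - vminus) := by abel
      rw [this]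
      exact add_mem hvB hv
    refine ⟨⟨hmem, fun i => ?_⟩, fun i => ?_⟩
    · have := hvQ i; have := hplus i
      simp only [Pi.add_apply, Pi.sub_apply]
      omega
    · have := hvQ i; have := hplus i
      simp only [Pi.add_apply, Pi.sub_apply]
      omega
  · intro v _; funext i; simp only [Pi.add_apply, Pi.sub_apply]; ring
  · intro v _; funext i; simp only [Pi.add_apply, Pi.sub_apply]; ring
  · intro v hvmem
    rw [Finset.mem_filter] at hvmem
    congr 1
    funext i
    simp only [Pi.add_apply, Pi.sub_apply]
    omega
end

section
/- Let m₋₂ ≥ m₋₁ ≥ 0 be integers and let f be the polynomial function on 5×5 complex matrices f(g) = a_{−2}(g)^{m₋₂−m₋₁} · a_{−2,−1}(g)^{m₋₁}. Then, as identities of functions on the space of all 5×5 complex matrices: D_{F_{−2,−1}} f = 0, D_{F_{−1,0}} f = 0, D_{F_{−2,−2}} f = m₋₂ · f, and D_{F_{−1,−1}} f = m₋₁ · f. (Thus f is a highest weight vector of weight [m₋₂, m₋₁] for the right regular action of 𝔬₅.) -/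
noncomputable section

/-- Rows and columns of `5×5` matrices are indexed by `I = {−2,−1,0,1,2}`, encoded as
`Fin 5` via `−2 ↦ 0`, `−1 ↦ 1`, `0 ↦ 2`, `1 ↦ 3`, `2 ↦ 4`. -/
abbrev Mat5 := Matrix (Fin 5) (Fin 5) ℂ

/-- The index `−2`. -/
def im2 : Fin 5 := 0
/-- The index `−1`. -/
def im1 : Fin 5 := 1
/-- The index `0`. -/
def iz : Fin 5 := 2
/-- The index `1`. -/
def ip1 : Fin 5 := 3
/-- The index `2`. -/
def ip2 : Fin 5 := 4

/-- Negation `i ↦ −i` on the index set `I = {−2,−1,0,1,2}`. -/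
def neg5 : Fin 5 → Fin 5 := ![4, 3, 2, 1, 0]

/-- The minor `a_i(g) = g_{−2,i}` (entry in row `−2`, column `i`). -/
def aF (i : Fin 5) (g : Mat5) : ℂ := g im2 i

/-- The minor `a_{i₁,i₂}(g) = g_{−2,i₁} g_{−1,i₂} − g_{−2,i₂} g_{−1,i₁}`
(the `2×2` minor on rows `−2,−1` and columns `i₁,i₂`). -/
def aaF (i1 i2 : Fin 5) (g : Mat5) : ℂ := g im2 i1 * g im1 i2 - g im2 i2 * g im1 i1

/-- The matrix unit `E_{i,j}`. -/
def EM (i j : Fin 5) : Mat5 := Matrix.single i j 1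

/-- `F_{i,j} = E_{i,j} − E_{−j,−i}`. -/
def FM (i j : Fin 5) : Mat5 := EM i j - EM (neg5 j) (neg5 i)

/-- The right infinitesimal shift: `(D_X f)(g) = (d/dt)|_{t=0} f(g + t·gX)`. -/
def Dop (X : Mat5) (f : Mat5 → ℂ) : Mat5 → ℂ :=
  fun g => deriv (fun t : ℂ => f (g + t • (g * X))) 0

/-- The left infinitesimal shift: `(L_X f)(g) = (d/dt)|_{t=0} f(g + t·Xg)`. -/
def Lop (X : Mat5) (f : Mat5 → ℂ) : Mat5 → ℂ :=
  fun g => deriv (fun t : ℂ => f (g + t • (X * g))) 0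

lemma mul_FM (g : Mat5) (i j k l : Fin 5) :
    (g * FM i j) k l =
      (if l = j then g k i else 0) - (if l = neg5 i then g k (neg5 j) else 0) := by
  rw [FM, EM, EM, Matrix.mul_sub, Matrix.sub_apply]
  congr 1
  · split
    · next hl => subst hl; simp
    · next hl => simp [hl]
  · split
    · next hl => subst hl; simp
    · next hl => simp [hl]

lemma deriv_one_add_pow_mul (n : ℕ) (c : ℂ) :
    deriv (fun t : ℂ => (1 + t) ^ n * c) 0 = (n : ℂ) * c := by
  have h1 : HasDerivAt (fun t : ℂ => 1 + t) 1 0 := (hasDerivAt_id (0:ℂ)).const_add 1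
  have h2 := (h1.pow n).mul_const c
  have := h2.deriv
  simpa using this

/-- The function `f(g) = a_{−2}(g)^{m₋₂−m₋₁} · a_{−2,−1}(g)^{m₋₁}` is a highest weight
vector of weight `[m₋₂, m₋₁]` for the right regular action of `𝔬₅`. -/
theorem highest_weight_vector (m2 m1 : ℕ) (h : m1 ≤ m2)
    (f : Mat5 → ℂ) (hf : f = fun g => (aF im2 g) ^ (m2 - m1) * (aaF im2 im1 g) ^ m1) :
    Dop (FM im2 im1) f = 0 ∧ Dop (FM im1 iz) f = 0 ∧
      Dop (FM im2 im2) f = (m2 : ℂ) • f ∧ Dop (FM im1 im1) f = (m1 : ℂ) • f := by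
  subst hf
  have hm : m2 - m1 + m1 = m2 := Nat.sub_add_cancel h
  refine ⟨?_, ?_, ?_, ?_⟩
  · funext g
    have he : (fun t : ℂ => aF im2 (g + t • (g * FM im2 im1)) ^ (m2 - m1) *
        aaF im2 im1 (g + t • (g * FM im2 im1)) ^ m1)
        = fun _ : ℂ => aF im2 g ^ (m2 - m1) * aaF im2 im1 g ^ m1 := by
      funext t
      have ha : aF im2 (g + t • (g * FM im2 im1)) = aF im2 g := by
        simp [aF, mul_FM, im2, im1, neg5]
      have haa : aaF im2 im1 (g + t • (g * FM im2 im1)) = aaF im2 im1 g := by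
        simp [aaF, mul_FM, im2, im1, neg5]
        ring
      rw [ha, haa]
    show deriv _ 0 = _
    rw [he, deriv_const]
    rfl
  · funext g
    have he : (fun t : ℂ => aF im2 (g + t • (g * FM im1 iz)) ^ (m2 - m1) *
        aaF im2 im1 (g + t • (g * FM im1 iz)) ^ m1)
        = fun _ : ℂ => aF im2 g ^ (m2 - m1) * aaF im2 im1 g ^ m1 := by
      funext t
      have ha : aF im2 (g + t • (g * FM im1 iz)) = aF im2 g := by
        simp [aF, mul_FM, im2, im1, iz, neg5]
      have haa : aaF im2 im1 (g + t • (g * FM im1 iz)) = aaF im2 im1 g := by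
        simp [aaF, mul_FM, im2, im1, iz, neg5]
      rw [ha, haa]
    show deriv _ 0 = _
    rw [he, deriv_const]
    rfl
  · funext g
    have he : (fun t : ℂ => aF im2 (g + t • (g * FM im2 im2)) ^ (m2 - m1) *
        aaF im2 im1 (g + t • (g * FM im2 im2)) ^ m1)
        = fun t : ℂ => (1 + t) ^ m2 * (aF im2 g ^ (m2 - m1) * aaF im2 im1 g ^ m1) := by
      funext t
      have ha : aF im2 (g + t • (g * FM im2 im2)) = (1 + t) * aF im2 g := by
        simp [aF, mul_FM, im2, neg5]
        ring
      have haa : aaF im2 im1 (g + t • (g * FM im2 im2)) = (1 + t) * aaF im2 im1 g := by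
        simp [aaF, mul_FM, im2, im1, neg5]
        ring
      rw [ha, haa, mul_pow, mul_pow,
        show (1 + t : ℂ) ^ m2 = (1 + t) ^ (m2 - m1) * (1 + t) ^ m1 by rw [← pow_add, hm]]
      ring
    show deriv _ 0 = _
    rw [he, deriv_one_add_pow_mul]
    rfl
  · funext g
    have he : (fun t : ℂ => aF im2 (g + t • (g * FM im1 im1)) ^ (m2 - m1) *
        aaF im2 im1 (g + t • (g * FM im1 im1)) ^ m1)
        = fun t : ℂ => (1 + t) ^ m1 * (aF im2 g ^ (m2 - m1) * aaF im2 im1 g ^ m1) := by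
      funext t
      have ha : aF im2 (g + t • (g * FM im1 im1)) = aF im2 g := by
        simp [aF, mul_FM, im2, im1, neg5]
      have haa : aaF im2 im1 (g + t • (g * FM im1 im1)) = (1 + t) * aaF im2 im1 g := by
        simp [aaF, mul_FM, im2, im1, neg5]
        ring
      rw [ha, haa, mul_pow]
      ring
    show deriv _ 0 = _
    rw [he, deriv_one_add_pow_mul]
    rfl
end
end

section
/- Let g be a 5×5 complex matrix satisfying gᵀ S g = S. Then the 2×2 minors on rows −2, −1 of g satisfy the quadratic relation a_{−2,0}(g)² + 2 · a_{−2,−1}(g) · a_{−2,1}(g) = 0. -/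
noncomputable section

/-- The `5×5` matrix `S` with `S_{i,j} = 1` if `j = −i` and `0` otherwise. -/
def SM : Mat5 := Matrix.of fun i j => if j = neg5 i then (1 : ℂ) else 0

/-- For `g` in the orthogonal group of `S` (`gᵀ S g = S`), the `2×2` minors on rows
`−2, −1` satisfy the quadratic relation `a_{−2,0}(g)² + 2·a_{−2,−1}(g)·a_{−2,1}(g) = 0`. -/
theorem minor_quadratic_relation (g : Mat5) (hg : g.transpose * SM * g = SM) :
    aaF im2 iz g ^ 2 + 2 * aaF im2 im1 g * aaF im2 ip1 g = 0 := by
  have hS : SM * SM = 1 := by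
    ext i j
    fin_cases i <;> fin_cases j <;>
      simp [SM, Matrix.mul_apply, Fin.sum_univ_five, neg5, Matrix.one_apply]
  have h1 : (SM * g.transpose * SM) * g = 1 := by
    rw [Matrix.mul_assoc, Matrix.mul_assoc, ← Matrix.mul_assoc g.transpose, hg, hS]
  have h2 : g * (SM * g.transpose * SM) = 1 := mul_eq_one_comm.mp h1
  have h3 : g * SM * g.transpose = SM := by
    have h4 : g * SM * g.transpose * SM = 1 := by
      rw [Matrix.mul_assoc, Matrix.mul_assoc, ← Matrix.mul_assoc SM g.transpose]
      exact h2
    have h5 := congrArg (fun m => m * SM) h4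
    simp only [Matrix.mul_assoc, hS, Matrix.mul_one, Matrix.one_mul] at h5
    simpa [Matrix.mul_assoc] using h5
  have e00 : (g * SM * g.transpose) im2 im2 = SM im2 im2 := by rw [h3]
  have e01 : (g * SM * g.transpose) im2 im1 = SM im2 im1 := by rw [h3]
  have e11 : (g * SM * g.transpose) im1 im1 = SM im1 im1 := by rw [h3]
  simp [Matrix.mul_apply, SM, neg5, Fin.sum_univ_five, Matrix.transpose_apply,
    im2, im1, iz, ip1, ip2] at e00 e01 e11
  simp only [aaF, im2, im1, iz, ip1, ip2]
  linear_combination (g 0 0)^2 * e11 - 2 * (g 0 0) * (g 1 0) * e01 + (g 1 0)^2 * e00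
end
end

section
/- Let B be the symmetric bilinear form on Λ²ℂ⁴ determined by x ∧ y = B(x,y)·(e_{−2}∧e_{−1}∧e_1∧e_2), and let W = {x ∈ Λ²ℂ⁴ : x ∧ ω = 0}. Then for every g ∈ Sp(4,ℂ) and all x, y ∈ Λ²ℂ⁴ one has B(Λ²g x, Λ²g y) = B(x,y); moreover the restriction of B to W is a nondegenerate symmetric bilinear form. -/
set_option maxHeartbeats 2000000

noncomputable section

open ExteriorAlgebra

/-- Coordinates of `ℂ⁴` are indexed by `{−2,−1,1,2}`, encoded as `Fin 4` via
`−2 ↦ 0`, `−1 ↦ 1`, `1 ↦ 2`, `2 ↦ 3`. -/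
abbrev V4 := Fin 4 → ℂ

/-- The exterior algebra of `ℂ⁴`; `Λ²ℂ⁴` is the submodule `⋀[ℂ]^2 V4` inside it. -/
abbrev EA := ExteriorAlgebra ℂ V4

/-- The basis vector `e_{−2}`. -/
def em2 : V4 := Pi.single 0 1
/-- The basis vector `e_{−1}`. -/
def em1 : V4 := Pi.single 1 1
/-- The basis vector `e_{1}`. -/
def ep1 : V4 := Pi.single 2 1
/-- The basis vector `e_{2}`. -/
def ep2 : V4 := Pi.single 3 1

/-- `ω = e_{−2}∧e_2 + e_{−1}∧e_1 ∈ Λ²ℂ⁴`. -/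
def ωs : EA := ι ℂ em2 * ι ℂ ep2 + ι ℂ em1 * ι ℂ ep1

/-- The top form `e_{−2}∧e_{−1}∧e_1∧e_2`. -/
def topw : EA := ι ℂ em2 * ι ℂ em1 * ι ℂ ep1 * ι ℂ ep2

/-- The Gram matrix `J` of the symplectic form whose associated `2`-form is `ω`. -/
def JM : Matrix (Fin 4) (Fin 4) ℂ := !![0,0,0,1; 0,0,1,0; 0,-1,0,0; -1,0,0,0]

/-- `g ∈ Sp(4,ℂ)`: `g` is invertible and `gᵀ J g = J`. -/
def IsSp4 (g : Matrix (Fin 4) (Fin 4) ℂ) : Prop :=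
  IsUnit g.det ∧ g.transpose * JM * g = JM

/-- The induced map `Λ²g` (as the functorial algebra map on the exterior algebra,
determined by `u∧v ↦ gu∧gv`). -/
def lam2 (g : Matrix (Fin 4) (Fin 4) ℂ) : EA →ₐ[ℂ] EA :=
  ExteriorAlgebra.map g.mulVecLin

/-- `W = {x ∈ Λ²ℂ⁴ : x ∧ ω = 0}`, as a submodule of the exterior algebra. -/
def Wsub : Submodule ℂ EA :=
  (⋀[ℂ]^2 V4) ⊓ LinearMap.ker (LinearMap.mulRight ℂ ωs)

/-- `W` as a subspace of the second exterior power `⋀[ℂ]^2 V4` (i.e. of `Λ²ℂ⁴`). -/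
def W2 : Submodule ℂ (⋀[ℂ]^2 V4) :=
  LinearMap.ker ((LinearMap.mulRight ℂ ωs).comp (⋀[ℂ]^2 V4).subtype)


namespace SpAuxProof

open Matrix

/-- `T` : right-associated top wedge. -/
def Tw : EA := ι ℂ em2 * (ι ℂ em1 * (ι ℂ ep1 * ι ℂ ep2))

lemma topw_eq_Tw : topw = Tw := by simp [topw, Tw, mul_assoc]

lemma anti (a b : V4) : ι ℂ a * ι ℂ b = -(ι ℂ b * ι ℂ a) :=
  eq_neg_of_add_eq_zero_left (ι_add_mul_swap a b)

lemma anti' (a b : V4) (z : EA) : ι ℂ b * (ι ℂ a * z) = -(ι ℂ a * (ι ℂ b * z)) := by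
  rw [← mul_assoc, ← mul_assoc, anti b a, neg_mul]

lemma sq' (a : V4) (z : EA) : ι ℂ a * (ι ℂ a * z) = 0 := by
  rw [← mul_assoc, ι_sq_zero, zero_mul]

lemma s10 : ι ℂ em1 * ι ℂ em2 = -(ι ℂ em2 * ι ℂ em1) := anti _ _
lemma s20 : ι ℂ ep1 * ι ℂ em2 = -(ι ℂ em2 * ι ℂ ep1) := anti _ _
lemma s30 : ι ℂ ep2 * ι ℂ em2 = -(ι ℂ em2 * ι ℂ ep2) := anti _ _
lemma s21 : ι ℂ ep1 * ι ℂ em1 = -(ι ℂ em1 * ι ℂ ep1) := anti _ _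
lemma s31 : ι ℂ ep2 * ι ℂ em1 = -(ι ℂ em1 * ι ℂ ep2) := anti _ _
lemma s32 : ι ℂ ep2 * ι ℂ ep1 = -(ι ℂ ep1 * ι ℂ ep2) := anti _ _
lemma s10' (z : EA) : ι ℂ em1 * (ι ℂ em2 * z) = -(ι ℂ em2 * (ι ℂ em1 * z)) := anti' _ _ _
lemma s20' (z : EA) : ι ℂ ep1 * (ι ℂ em2 * z) = -(ι ℂ em2 * (ι ℂ ep1 * z)) := anti' _ _ _
lemma s30' (z : EA) : ι ℂ ep2 * (ι ℂ em2 * z) = -(ι ℂ em2 * (ι ℂ ep2 * z)) := anti' _ _ _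
lemma s21' (z : EA) : ι ℂ ep1 * (ι ℂ em1 * z) = -(ι ℂ em1 * (ι ℂ ep1 * z)) := anti' _ _ _
lemma s31' (z : EA) : ι ℂ ep2 * (ι ℂ em1 * z) = -(ι ℂ em1 * (ι ℂ ep2 * z)) := anti' _ _ _
lemma s32' (z : EA) : ι ℂ ep2 * (ι ℂ ep1 * z) = -(ι ℂ ep1 * (ι ℂ ep2 * z)) := anti' _ _ _

lemma ι_expand (u : V4) :
    ι ℂ u = u 0 • ι ℂ em2 + u 1 • ι ℂ em1 + u 2 • ι ℂ ep1 + u 3 • ι ℂ ep2 := by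
  have h : u = u 0 • em2 + u 1 • em1 + u 2 • ep1 + u 3 • ep2 := by
    funext i; fin_cases i <;>
      simp [em2, em1, ep1, ep2, Pi.single_apply]
  conv_lhs => rw [h]
  simp

lemma mul_expand (u v : V4) : ι ℂ u * ι ℂ v =
      (u 0 * v 1 - u 1 * v 0) • (ι ℂ em2 * ι ℂ em1)
    + (u 0 * v 2 - u 2 * v 0) • (ι ℂ em2 * ι ℂ ep1)
    + (u 0 * v 3 - u 3 * v 0) • (ι ℂ em2 * ι ℂ ep2)
    + (u 1 * v 2 - u 2 * v 1) • (ι ℂ em1 * ι ℂ ep1)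
    + (u 1 * v 3 - u 3 * v 1) • (ι ℂ em1 * ι ℂ ep2)
    + (u 2 * v 3 - u 3 * v 2) • (ι ℂ ep1 * ι ℂ ep2) := by
  rw [ι_expand u, ι_expand v]
  simp only [mul_add, add_mul, smul_mul_assoc, mul_smul_comm, ι_sq_zero, smul_zero,
    s10, s20, s30, s21, s31, s32, smul_neg]
  module

/-- the family of alternating maps used to detect the top form -/
def fam : ∀ i : ℕ, V4 [⋀^Fin i]→ₗ[ℂ] ℂ
  | 4 => Matrix.detRowAlternating
  | _ => 0

lemma lift_topw : liftAlternating (R := ℂ) fam topw = 1 := by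
  rw [topw_eq_Tw, Tw, liftAlternating_ι_mul, liftAlternating_ι_mul, liftAlternating_ι_mul,
    liftAlternating_ι]
  show (((Matrix.detRowAlternating.curryLeft em2).curryLeft em1).curryLeft ep1) ![ep2] = 1
  simp only [AlternatingMap.curryLeft_apply_apply]
  show Matrix.det ![em2, em1, ep1, ep2] = 1
  have h1 : ![em2, em1, ep1, ep2] = (1 : Matrix (Fin 4) (Fin 4) ℂ) := by
    funext i j
    fin_cases i <;> fin_cases j <;>
      simp [em2, em1, ep1, ep2, Matrix.one_apply, Pi.single_apply, Matrix.vecHead,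
        Matrix.vecTail]
  rw [h1, Matrix.det_one]

lemma topw_ne : topw ≠ 0 := by
  intro h
  have h2 := lift_topw
  rw [h, map_zero] at h2
  norm_num at h2

lemma Tw_ne : Tw ≠ 0 := topw_eq_Tw ▸ topw_ne

lemma cancel_smul {v : EA} (hv : v ≠ 0) {a b : ℂ} (h : a • v = b • v) : a = b := by
  by_contra hab
  have h2 : (a - b) • v = 0 := by rw [sub_smul, h, sub_self]
  rcases smul_eq_zero.mp h2 with h3 | h3
  · exact hab (sub_eq_zero.mp h3)
  · exact hv h3

lemma cancel_smul0 {v : EA} (hv : v ≠ 0) {a : ℂ} (h : a • v = 0) : a = 0 :=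
  cancel_smul hv (by rw [h, zero_smul])

lemma JM_sq : JM * JM = (-1 : Matrix (Fin 4) (Fin 4) ℂ) := by
  funext i j
  fin_cases i <;> fin_cases j <;>
    simp [JM, Matrix.mul_apply, Fin.sum_univ_four, Matrix.one_apply, Matrix.vecHead,
      Matrix.vecTail]

lemma sp_swap {g : Matrix (Fin 4) (Fin 4) ℂ} (h : gᵀ * JM * g = JM) :
    g * JM * gᵀ = JM := by
  have hleft : (-JM * gᵀ * JM) * g = 1 := by
    have h1 : (-JM) * (gᵀ * JM * g) = (1 : Matrix (Fin 4) (Fin 4) ℂ) := by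
      rw [h, Matrix.neg_mul, JM_sq]; simp
    calc (-JM * gᵀ * JM) * g = (-JM) * (gᵀ * JM * g) := by
          simp only [Matrix.mul_assoc]
      _ = 1 := h1
  have hright : g * (-JM * gᵀ * JM) = 1 := mul_eq_one_comm.mp hleft
  have h2 : g * JM * gᵀ * (JM * JM) = -JM := by
    calc g * JM * gᵀ * (JM * JM)
        = (g * (-JM * gᵀ * JM)) * (-JM) := by
          simp only [Matrix.neg_mul, Matrix.mul_neg, Matrix.mul_assoc, neg_neg]
      _ = -JM := by rw [hright, Matrix.one_mul]
  rw [JM_sq] at h2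
  simpa using h2

lemma e01 {g : Matrix (Fin 4) (Fin 4) ℂ} (h : g * JM * gᵀ = JM) :
    g 0 0 * g 1 3 - g 0 3 * g 1 0 + (g 0 1 * g 1 2 - g 0 2 * g 1 1) = 0 := by
  have h2 : (g * JM * gᵀ) 0 1 = JM 0 1 := by rw [h]
  simp [Matrix.mul_apply, Fin.sum_univ_four, JM, Matrix.transpose_apply, Matrix.vecHead,
    Matrix.vecTail] at h2
  linear_combination h2

lemma e02 {g : Matrix (Fin 4) (Fin 4) ℂ} (h : g * JM * gᵀ = JM) :
    g 0 0 * g 2 3 - g 0 3 * g 2 0 + (g 0 1 * g 2 2 - g 0 2 * g 2 1) = 0 := by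
  have h2 : (g * JM * gᵀ) 0 2 = JM 0 2 := by rw [h]
  simp [Matrix.mul_apply, Fin.sum_univ_four, JM, Matrix.transpose_apply, Matrix.vecHead,
    Matrix.vecTail] at h2
  linear_combination h2

lemma e03 {g : Matrix (Fin 4) (Fin 4) ℂ} (h : g * JM * gᵀ = JM) :
    g 0 0 * g 3 3 - g 0 3 * g 3 0 + (g 0 1 * g 3 2 - g 0 2 * g 3 1) = 1 := by
  have h2 : (g * JM * gᵀ) 0 3 = JM 0 3 := by rw [h]
  simp [Matrix.mul_apply, Fin.sum_univ_four, JM, Matrix.transpose_apply, Matrix.vecHead,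
    Matrix.vecTail] at h2
  linear_combination h2

lemma e12 {g : Matrix (Fin 4) (Fin 4) ℂ} (h : g * JM * gᵀ = JM) :
    g 1 0 * g 2 3 - g 1 3 * g 2 0 + (g 1 1 * g 2 2 - g 1 2 * g 2 1) = 1 := by
  have h2 : (g * JM * gᵀ) 1 2 = JM 1 2 := by rw [h]
  simp [Matrix.mul_apply, Fin.sum_univ_four, JM, Matrix.transpose_apply, Matrix.vecHead,
    Matrix.vecTail] at h2
  linear_combination h2

lemma e13 {g : Matrix (Fin 4) (Fin 4) ℂ} (h : g * JM * gᵀ = JM) :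
    g 1 0 * g 3 3 - g 1 3 * g 3 0 + (g 1 1 * g 3 2 - g 1 2 * g 3 1) = 0 := by
  have h2 : (g * JM * gᵀ) 1 3 = JM 1 3 := by rw [h]
  simp [Matrix.mul_apply, Fin.sum_univ_four, JM, Matrix.transpose_apply, Matrix.vecHead,
    Matrix.vecTail] at h2
  linear_combination h2

lemma e23 {g : Matrix (Fin 4) (Fin 4) ℂ} (h : g * JM * gᵀ = JM) :
    g 2 0 * g 3 3 - g 2 3 * g 3 0 + (g 2 1 * g 3 2 - g 2 2 * g 3 1) = 0 := by
  have h2 : (g * JM * gᵀ) 2 3 = JM 2 3 := by rw [h]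
  simp [Matrix.mul_apply, Fin.sum_univ_four, JM, Matrix.transpose_apply, Matrix.vecHead,
    Matrix.vecTail] at h2
  linear_combination h2



lemma map_omega {g : Matrix (Fin 4) (Fin 4) ℂ} (h : g * JM * gᵀ = JM) :
    ExteriorAlgebra.map g.mulVecLin ωs = ωs := by
  have c0 : ∀ k, g.mulVecLin em2 k = g k 0 := by
    intro k; simp [em2, Matrix.mulVecLin_apply]
  have c1 : ∀ k, g.mulVecLin em1 k = g k 1 := by
    intro k; simp [em1, Matrix.mulVecLin_apply]
  have c2 : ∀ k, g.mulVecLin ep1 k = g k 2 := by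
    intro k; simp [ep1, Matrix.mulVecLin_apply]
  have c3 : ∀ k, g.mulVecLin ep2 k = g k 3 := by
    intro k; simp [ep2, Matrix.mulVecLin_apply]
  rw [ωs, map_add, _root_.map_mul, _root_.map_mul, map_apply_ι, map_apply_ι, map_apply_ι,
    map_apply_ι, mul_expand (g.mulVecLin em2) (g.mulVecLin ep2),
    mul_expand (g.mulVecLin em1) (g.mulVecLin ep1)]
  simp only [c0, c1, c2, c3]
  match_scalars
  · linear_combination e01 h
  · linear_combination e02 h
  · linear_combination e03 h
  · linear_combination e12 h
  · linear_combination e13 h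
  · linear_combination e23 h

lemma omega_sq : ωs * ωs = (2 : ℂ) • topw := by
  simp [ωs, topw, mul_assoc, mul_add, add_mul, sq', ι_sq_zero, s10, s20, s30, s21, s31, s32,
    s10', s20', s30', s21', s31', s32', mul_neg, neg_mul, two_smul]

lemma mem_two (u v : V4) : ι ℂ u * ι ℂ v ∈ ⋀[ℂ]^2 V4 := by
  show _ ∈ LinearMap.range (ι ℂ (M := V4)) ^ 2
  rw [pow_two]
  exact Submodule.mul_mem_mul (LinearMap.mem_range_self _ u) (LinearMap.mem_range_self _ v)

lemma span2 (z : EA) (hz : z ∈ ⋀[ℂ]^2 V4) :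
    ∃ a b p q c d : ℂ, z =
      a • (ι ℂ em2 * ι ℂ em1) + b • (ι ℂ em2 * ι ℂ ep1) + p • (ι ℂ em2 * ι ℂ ep2)
      + q • (ι ℂ em1 * ι ℂ ep1) + c • (ι ℂ em1 * ι ℂ ep2) + d • (ι ℂ ep1 * ι ℂ ep2) := by
  have hz' : z ∈ LinearMap.range (ι ℂ (M := V4)) * LinearMap.range (ι ℂ (M := V4)) := by
    rw [← pow_two]; exact hz
  refine Submodule.mul_induction_on hz' ?_ ?_
  · rintro m ⟨u, rfl⟩ n ⟨v, rfl⟩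
    exact ⟨_, _, _, _, _, _, mul_expand u v⟩
  · rintro x y ⟨a₁, b₁, p₁, q₁, c₁, d₁, rfl⟩ ⟨a₂, b₂, p₂, q₂, c₂, d₂, rfl⟩
    refine ⟨a₁+a₂, b₁+b₂, p₁+p₂, q₁+q₂, c₁+c₂, d₁+d₂, ?_⟩
    module

lemma comm2 {z w : EA} (hz : z ∈ ⋀[ℂ]^2 V4) (hw : w ∈ ⋀[ℂ]^2 V4) : z * w = w * z := by
  obtain ⟨a₁, b₁, p₁, q₁, c₁, d₁, rfl⟩ := span2 z hz
  obtain ⟨a₂, b₂, p₂, q₂, c₂, d₂, rfl⟩ := span2 w hw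
  simp only [mul_add, add_mul, smul_mul_assoc, mul_smul_comm, mul_assoc, sq', ι_sq_zero,
    s10, s20, s30, s21, s31, s32, s10', s20', s30', s21', s31', s32', mul_neg, neg_mul,
    smul_neg, smul_zero, mul_zero, zero_mul, add_zero, zero_add]
  module

lemma mem_W2 (x : ⋀[ℂ]^2 V4) : x ∈ W2 ↔ (x : EA) * ωs = 0 := by
  simp [W2, LinearMap.mem_ker, LinearMap.mulRight_apply]

end SpAuxProof

open SpAuxProof Matrix in
/-- Let `B` be the bilinear form on `Λ²ℂ⁴` determined by `x ∧ y = B(x,y)·(e_{−2}∧e_{−1}∧e_1∧e_2)`.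
Then `B` is invariant under `Λ²g` for all `g ∈ Sp(4,ℂ)`, and its restriction to
`W = {x : x ∧ ω = 0}` is a nondegenerate symmetric bilinear form. -/
theorem B_invariant_nondegenerate_on_W
    (B : (⋀[ℂ]^2 V4) →ₗ[ℂ] (⋀[ℂ]^2 V4) →ₗ[ℂ] ℂ)
    (hB : ∀ x y : ⋀[ℂ]^2 V4, (x : EA) * (y : EA) = B x y • topw) :
    (∀ g : Matrix (Fin 4) (Fin 4) ℂ, IsSp4 g →
      ∀ x y x' y' : ⋀[ℂ]^2 V4,
        (x' : EA) = lam2 g (x : EA) → (y' : EA) = lam2 g (y : EA) →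
          B x' y' = B x y) ∧
    (∀ x ∈ W2, ∀ y ∈ W2, B x y = B y x) ∧
    (∀ x ∈ W2, (∀ y ∈ W2, B x y = 0) → x = 0) := by
  refine ⟨?_, ?_, ?_⟩
  · -- invariance
    rintro g ⟨hdet, hJ⟩ x y x' y' hx hy
    have hg' : g * JM * gᵀ = JM := sp_swap hJ
    have hω : lam2 g ωs = ωs := map_omega hg'
    have htop : lam2 g topw = topw := by
      have h2 : lam2 g (ωs * ωs) = ωs * ωs := by rw [_root_.map_mul, hω]
      rw [omega_sq, _root_.map_smul] at h2
      have h3 := congrArg (fun z : EA => (2 : ℂ)⁻¹ • z) h2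
      simpa [smul_smul] using h3
    have e1 := hB x' y'
    rw [hx, hy, ← _root_.map_mul, hB x y, _root_.map_smul, htop] at e1
    exact (cancel_smul topw_ne e1).symm
  · -- symmetry
    intro x hx y hy
    have hc : (x : EA) * (y : EA) = (y : EA) * (x : EA) := comm2 x.2 y.2
    rw [hB x y, hB y x] at hc
    exact cancel_smul topw_ne hc
  · -- nondegeneracy
    intro x hx h0
    obtain ⟨a, b, p, q, c, d, hxe⟩ := span2 (x : EA) x.2
    -- constraint from x ∈ W
    have hxW : (x : EA) * ωs = 0 := (mem_W2 x).mp hx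
    rw [hxe] at hxW
    have hsum : (p + q) • Tw = 0 := by
      rw [← hxW]
      simp only [ωs, Tw, mul_add, add_mul, smul_mul_assoc, mul_smul_comm, mul_assoc, sq',
        ι_sq_zero, s10, s20, s30, s21, s31, s32, s10', s20', s30', s21', s31', s32', mul_neg,
        neg_mul, smul_neg, smul_zero, mul_zero, zero_mul, add_zero, zero_add]
      module
    have hpq : p + q = 0 := cancel_smul0 Tw_ne hsum
    -- test elements
    have testW : ∀ (u v : V4), (ι ℂ u * ι ℂ v) * ωs = 0 →
        ∀ m : (⟨ι ℂ u * ι ℂ v, mem_two u v⟩ : ⋀[ℂ]^2 V4) ∈ W2, True := fun _ _ _ _ => trivial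
    have key : ∀ y : ⋀[ℂ]^2 V4, y ∈ W2 → (x : EA) * (y : EA) = 0 := by
      intro y hyW
      rw [hB x y, h0 y hyW, zero_smul]
    -- y = E23
    have ha : a = 0 := by
      have hyW : (⟨ι ℂ ep1 * ι ℂ ep2, mem_two ep1 ep2⟩ : ⋀[ℂ]^2 V4) ∈ W2 := by
        rw [mem_W2]
        simp [ωs, mul_add, mul_assoc, sq', ι_sq_zero, s10, s20, s30, s21, s31, s32, s10',
          s20', s30', s21', s31', s32', mul_neg, neg_mul]
      have h1 := key _ hyW
      rw [hxe] at h1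
      refine cancel_smul0 Tw_ne ?_
      rw [← h1]
      simp only [Tw, mul_add, add_mul, smul_mul_assoc, mul_smul_comm, mul_assoc, sq',
        ι_sq_zero, s10, s20, s30, s21, s31, s32, s10', s20', s30', s21', s31', s32', mul_neg,
        neg_mul, smul_neg, smul_zero, mul_zero, zero_mul, add_zero, zero_add]
      module
    -- y = E01
    have hd : d = 0 := by
      have hyW : (⟨ι ℂ em2 * ι ℂ em1, mem_two em2 em1⟩ : ⋀[ℂ]^2 V4) ∈ W2 := by
        rw [mem_W2]
        simp [ωs, mul_add, mul_assoc, sq', ι_sq_zero, s10, s20, s30, s21, s31, s32, s10',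
          s20', s30', s21', s31', s32', mul_neg, neg_mul]
      have h1 := key _ hyW
      rw [hxe] at h1
      refine cancel_smul0 Tw_ne ?_
      rw [← h1]
      simp only [Tw, mul_add, add_mul, smul_mul_assoc, mul_smul_comm, mul_assoc, sq',
        ι_sq_zero, s10, s20, s30, s21, s31, s32, s10', s20', s30', s21', s31', s32', mul_neg,
        neg_mul, smul_neg, smul_zero, mul_zero, zero_mul, add_zero, zero_add]
      module
    -- y = E13
    have hb : b = 0 := by
      have hyW : (⟨ι ℂ em1 * ι ℂ ep2, mem_two em1 ep2⟩ : ⋀[ℂ]^2 V4) ∈ W2 := by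
        rw [mem_W2]
        simp [ωs, mul_add, mul_assoc, sq', ι_sq_zero, s10, s20, s30, s21, s31, s32, s10',
          s20', s30', s21', s31', s32', mul_neg, neg_mul]
      have h1 := key _ hyW
      rw [hxe] at h1
      have hb' : (-b) • Tw = 0 := by
        rw [← h1]
        simp only [Tw, mul_add, add_mul, smul_mul_assoc, mul_smul_comm, mul_assoc, sq',
          ι_sq_zero, s10, s20, s30, s21, s31, s32, s10', s20', s30', s21', s31', s32',
          mul_neg, neg_mul, smul_neg, smul_zero, mul_zero, zero_mul, add_zero, zero_add]
        module
      exact neg_eq_zero.mp (cancel_smul0 Tw_ne hb')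
    -- y = E02
    have hc : c = 0 := by
      have hyW : (⟨ι ℂ em2 * ι ℂ ep1, mem_two em2 ep1⟩ : ⋀[ℂ]^2 V4) ∈ W2 := by
        rw [mem_W2]
        simp [ωs, mul_add, mul_assoc, sq', ι_sq_zero, s10, s20, s30, s21, s31, s32, s10',
          s20', s30', s21', s31', s32', mul_neg, neg_mul]
      have h1 := key _ hyW
      rw [hxe] at h1
      have hc' : (-c) • Tw = 0 := by
        rw [← h1]
        simp only [Tw, mul_add, add_mul, smul_mul_assoc, mul_smul_comm, mul_assoc, sq',
          ι_sq_zero, s10, s20, s30, s21, s31, s32, s10', s20', s30', s21', s31', s32',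
          mul_neg, neg_mul, smul_neg, smul_zero, mul_zero, zero_mul, add_zero, zero_add]
        module
      exact neg_eq_zero.mp (cancel_smul0 Tw_ne hc')
    -- y = E03 - E12
    have hdiff : q - p = 0 := by
      have hyW : (⟨ι ℂ em2 * ι ℂ ep2 - ι ℂ em1 * ι ℂ ep1,
          Submodule.sub_mem _ (mem_two em2 ep2) (mem_two em1 ep1)⟩ : ⋀[ℂ]^2 V4) ∈ W2 := by
        rw [mem_W2]
        have e03 : (ι ℂ em2 * ι ℂ ep2) * ωs = topw := by
          simp [ωs, topw, mul_add, mul_assoc, sq', ι_sq_zero, s10, s20, s30, s21, s31, s32,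
            s10', s20', s30', s21', s31', s32', mul_neg, neg_mul]
        have e12 : (ι ℂ em1 * ι ℂ ep1) * ωs = topw := by
          simp [ωs, topw, mul_add, mul_assoc, sq', ι_sq_zero, s10, s20, s30, s21, s31, s32,
            s10', s20', s30', s21', s31', s32', mul_neg, neg_mul]
        show (ι ℂ em2 * ι ℂ ep2 - ι ℂ em1 * ι ℂ ep1) * ωs = 0
        rw [sub_mul, e03, e12, sub_self]
      have h1 := key _ hyW
      rw [hxe] at h1
      have hA : (a • (ι ℂ em2 * ι ℂ em1) + b • (ι ℂ em2 * ι ℂ ep1) + p • (ι ℂ em2 * ι ℂ ep2)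
          + q • (ι ℂ em1 * ι ℂ ep1) + c • (ι ℂ em1 * ι ℂ ep2) + d • (ι ℂ ep1 * ι ℂ ep2))
          * (ι ℂ em2 * ι ℂ ep2) = q • Tw := by
        simp only [Tw, mul_add, add_mul, smul_mul_assoc, mul_smul_comm, mul_assoc, sq',
          ι_sq_zero, s10, s20, s30, s21, s31, s32, s10', s20', s30', s21', s31', s32',
          mul_neg, neg_mul, smul_neg, smul_zero, mul_zero, zero_mul, add_zero, zero_add]
        module
      have hB2 : (a • (ι ℂ em2 * ι ℂ em1) + b • (ι ℂ em2 * ι ℂ ep1) + p • (ι ℂ em2 * ι ℂ ep2)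
          + q • (ι ℂ em1 * ι ℂ ep1) + c • (ι ℂ em1 * ι ℂ ep2) + d • (ι ℂ ep1 * ι ℂ ep2))
          * (ι ℂ em1 * ι ℂ ep1) = p • Tw := by
        simp only [Tw, mul_add, add_mul, smul_mul_assoc, mul_smul_comm, mul_assoc, sq',
          ι_sq_zero, s10, s20, s30, s21, s31, s32, s10', s20', s30', s21', s31', s32',
          mul_neg, neg_mul, smul_neg, smul_zero, mul_zero, zero_mul, add_zero, zero_add]
        module
      have h2 : q • Tw - p • Tw = 0 := by
        rw [← hA, ← hB2, ← mul_sub]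
        exact h1
      refine cancel_smul0 Tw_ne ?_
      rw [sub_smul]
      exact h2
    have hp : p = 0 := by linear_combination (hpq - hdiff) / 2
    have hq : q = 0 := by linear_combination (hpq + hdiff) / 2
    have hz : (x : EA) = 0 := by
      rw [hxe, ha, hb, hp, hq, hc, hd]
      simp
    exact Subtype.ext hz
end
end

section
/- Let f be an element of the subalgebra of polynomial functions on 5×5 complex matrices generated by the six minors a_{−2}, a_{−1}, a_{1}, a_{−2,−1}, a_{−2,1}, a_{−1,1}. (a) If every monomial of f (written in the six algebraically independent minors) has total degree d in a_{−2}, a_{−1}, a_{1}, then L_{F_{−2,−1}}^{d+1} f = 0. (b) If every monomial of f has total degree d' in a_{−2,−1}, a_{−2,1}, a_{−1,1}, then L_{F_{−1,0}}^{2d'+1} f = 0. -/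
noncomputable section

/-- The six algebraically independent minors
`a_{−2}, a_{−1}, a_{1}, a_{−2,−1}, a_{−2,1}, a_{−1,1}`. -/
def minors : Fin 6 → Mat5 → ℂ :=
  ![aF im2, aF im1, aF ip1, aaF im2 im1, aaF im2 ip1, aaF im1 ip1]

open MvPolynomial

abbrev R5 := MvPolynomial (Fin 5 × Fin 5) ℂ

def ent (g : Mat5) : Fin 5 × Fin 5 → ℂ := fun s => g s.1 s.2

def pD (M : Mat5) : Derivation ℂ R5 R5 :=
  MvPolynomial.mkDerivation ℂ (fun s => ∑ k, MvPolynomial.C (M s.1 k) * MvPolynomial.X (k, s.2))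

lemma pD_X (M : Mat5) (s : Fin 5 × Fin 5) :
    pD M (X s) = ∑ k, C (M s.1 k) * X (k, s.2) := by
  simp [pD, MvPolynomial.mkDerivation_X]

lemma eval_pD_X (M : Mat5) (v : Fin 5 × Fin 5 → ℂ) (s : Fin 5 × Fin 5) :
    eval v (pD M (X s)) = ∑ k, M s.1 k * v (k, s.2) := by
  simp [pD_X]

lemma pD_C (M : Mat5) (a : ℂ) : pD M (C a) = 0 := by
  rw [← MvPolynomial.algebraMap_eq]
  exact Derivation.map_algebraMap _ _

lemma hasDerivAt_eval (M : Mat5) (v : Fin 5 × Fin 5 → ℂ) (p : R5) :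
    HasDerivAt (fun t : ℂ => eval (fun s => v s + t * ∑ k, M s.1 k * v (k, s.2)) p)
      (eval v (pD M p)) 0 := by
  induction p using MvPolynomial.induction_on with
  | C a =>
      simp only [eval_C, pD_C, map_zero]
      exact hasDerivAt_const 0 a
  | add p q hp hq =>
      simp only [map_add]
      exact hp.add hq
  | mul_X p s hp =>
      have hlin : HasDerivAt
          (fun t : ℂ => v s + t * ∑ k, M s.1 k * v (k, s.2))
          (∑ k, M s.1 k * v (k, s.2)) 0 := by
        simpa using ((hasDerivAt_id (0 : ℂ)).mul_const (∑ k, M s.1 k * v (k, s.2))).const_add (v s)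
      have h := hp.mul hlin
      simp only [map_mul, eval_X]
      refine h.congr_deriv ?_
      have h0 : (fun s' : Fin 5 × Fin 5 => v s' + (0:ℂ) * ∑ k, M s'.1 k * v (k, s'.2)) = v := by
        funext s'; ring
      rw [h0, Derivation.leibniz]
      simp only [map_add, smul_eq_mul, map_mul, eval_X, eval_pD_X]
      ring

lemma Lop_eval (M : Mat5) (p : R5) :
    Lop M (fun g => eval (ent g) p) = fun g => eval (ent g) (pD M p) := by
  funext g
  have h := hasDerivAt_eval M (ent g) p
  have he : (fun t : ℂ => eval (ent (g + t • (M * g))) p)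
      = fun t : ℂ => eval (fun s => ent g s + t * ∑ k, M s.1 k * ent g (k, s.2)) p := by
    funext t
    have : ent (g + t • (M * g)) = fun s => ent g s + t * ∑ k, M s.1 k * ent g (k, s.2) := by
      funext s
      simp [ent, Matrix.add_apply, Matrix.smul_apply, Matrix.mul_apply, smul_eq_mul]
    rw [this]
  show deriv (fun t : ℂ => eval (ent (g + t • (M * g))) p) 0 = _
  rw [he]
  exact h.deriv

lemma Lop_iter_eval (M : Mat5) (p : R5) (n : ℕ) :
    (Lop M)^[n] (fun g => eval (ent g) p) = fun g => eval (ent g) ((⇑(pD M))^[n] p) := by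
  induction n generalizing p with
  | zero => rfl
  | succ n ih =>
      rw [Function.iterate_succ_apply, Lop_eval, ih, Function.iterate_succ_apply]

-- iterate algebra lemmas
lemma iter_zero (D : Derivation ℂ R5 R5) (n : ℕ) : (⇑D)^[n] 0 = 0 := by
  induction n with
  | zero => rfl
  | succ n ih => rw [Function.iterate_succ_apply, map_zero, ih]

lemma iter_add (D : Derivation ℂ R5 R5) (n : ℕ) (x y : R5) :
    (⇑D)^[n] (x + y) = (⇑D)^[n] x + (⇑D)^[n] y := by
  induction n generalizing x y with
  | zero => rfl
  | succ n ih => rw [Function.iterate_succ_apply, map_add, ih,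
      Function.iterate_succ_apply, Function.iterate_succ_apply]

lemma nil_mono (D : Derivation ℂ R5 R5) {k n : ℕ} {u : R5} (h : (⇑D)^[k] u = 0)
    (hkn : k ≤ n) : (⇑D)^[n] u = 0 := by
  obtain ⟨m, rfl⟩ := Nat.exists_eq_add_of_le hkn
  rw [Nat.add_comm, Function.iterate_add_apply, h, iter_zero]

lemma nil_mul (D : Derivation ℂ R5 R5) :
    ∀ n a b : ℕ, ∀ u v : R5, a + b ≤ n → (⇑D)^[a+1] u = 0 → (⇑D)^[b+1] v = 0 →
      (⇑D)^[a+b+1] (u * v) = 0 := by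
  intro n
  induction n with
  | zero =>
      intro a b u v hab hu hv
      have ha : a = 0 := by omega
      have hb : b = 0 := by omega
      subst ha; subst hb
      have hu0 : D u = 0 := by simpa using hu
      have hv0 : D v = 0 := by simpa using hv
      show D (u * v) = 0
      rw [Derivation.leibniz, hu0, hv0]
      simp
  | succ n ih =>
      intro a b u v hab hu hv
      rw [Function.iterate_succ_apply, Derivation.leibniz, smul_eq_mul, smul_eq_mul,
        iter_add]
      have h1 : (⇑D)^[a+b] (u * D v) = 0 := by
        cases b with
        | zero =>
            have hv0 : D v = 0 := by simpa using hv
            rw [hv0, mul_zero]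
            exact iter_zero D _
        | succ b' =>
            have hv' : (⇑D)^[b'+1] (D v) = 0 := by
              rw [← Function.iterate_succ_apply]; exact hv
            have := ih a b' u (D v) (by omega) hu hv'
            have hle : a + b' + 1 ≤ a + (b'+1) := by omega
            exact nil_mono D this hle
      have h2 : (⇑D)^[a+b] (v * D u) = 0 := by
        cases a with
        | zero =>
            have hu0 : D u = 0 := by simpa using hu
            rw [hu0, mul_zero]
            exact iter_zero D _
        | succ a' =>
            have hu' : (⇑D)^[a'+1] (D u) = 0 := by
              rw [← Function.iterate_succ_apply]; exact hu
            have := ih b a' v (D u) (by omega) hv hu'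
            have hle : b + a' + 1 ≤ a' + 1 + b := by omega
            exact nil_mono D this hle
      rw [h1, h2, add_zero]

lemma nil_pow (D : Derivation ℂ R5 R5) {k : ℕ} {u : R5} (h : (⇑D)^[k+1] u = 0) (m : ℕ) :
    (⇑D)^[m * k + 1] (u ^ m) = 0 := by
  induction m with
  | zero =>
      simp only [pow_zero, Nat.zero_mul, Function.iterate_one]
      exact D.map_one_eq_zero
  | succ m ih =>
      have := nil_mul D (m * k + k) (m * k) k (u ^ m) u le_rfl ih h
      have heq : m * k + k + 1 = (m + 1) * k + 1 := by ring
      rw [pow_succ]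
      rw [← heq]
      exact this

lemma nil_prod (D : Derivation ℂ R5 R5) (s : Finset (Fin 6)) (u : Fin 6 → R5) (k : Fin 6 → ℕ)
    (h : ∀ i ∈ s, (⇑D)^[k i + 1] (u i) = 0) :
    (⇑D)^[(∑ i ∈ s, k i) + 1] (∏ i ∈ s, u i) = 0 := by
  induction s using Finset.induction with
  | empty =>
      simpa using D.map_one_eq_zero
  | insert a s' hnotmem ih =>
      rw [Finset.prod_insert hnotmem, Finset.sum_insert hnotmem]
      exact nil_mul D _ (k a) (∑ i ∈ s', k i) _ _ le_rfl (h a (Finset.mem_insert_self a s'))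
        (ih fun i hi => h i (Finset.mem_insert_of_mem hi))

lemma nil_sum (D : Derivation ℂ R5 R5) (n : ℕ) (s : Finset (Fin 6 →₀ ℕ)) (φ : (Fin 6 →₀ ℕ) → R5)
    (h : ∀ i ∈ s, (⇑D)^[n] (φ i) = 0) :
    (⇑D)^[n] (∑ i ∈ s, φ i) = 0 := by
  induction s using Finset.induction with
  | empty => simpa using iter_zero D n
  | insert a s' hnotmem ih =>
      rw [Finset.sum_insert hnotmem, iter_add, h a (Finset.mem_insert_self a s'),
        ih fun i hi => h i (Finset.mem_insert_of_mem hi), add_zero]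


def Ma : Fin 6 → R5 :=
  ![X (0, 0), X (0, 1), X (0, 3),
    X (0, 0) * X (1, 1) - X (0, 1) * X (1, 0),
    X (0, 0) * X (1, 3) - X (0, 3) * X (1, 0),
    X (0, 1) * X (1, 3) - X (0, 3) * X (1, 1)]

def wa : Fin 6 → ℕ := ![1, 1, 1, 0, 0, 0]
def wb : Fin 6 → ℕ := ![0, 0, 0, 2, 2, 2]

lemma Da_X0 (j : Fin 5) : pD (FM im2 im1) (X (0, j)) = X (1, j) := by
  rw [pD_X, Fin.sum_univ_five]
  simp [FM, EM, neg5, im2, im1, Matrix.single, Matrix.sub_apply, Matrix.of_apply]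

lemma Da_X1 (j : Fin 5) : pD (FM im2 im1) (X (1, j)) = 0 := by
  rw [pD_X, Fin.sum_univ_five]
  simp [FM, EM, neg5, im2, im1, Matrix.single, Matrix.sub_apply, Matrix.of_apply]

lemma Db_X0 (j : Fin 5) : pD (FM im1 iz) (X (0, j)) = 0 := by
  rw [pD_X, Fin.sum_univ_five]
  simp [FM, EM, neg5, im1, iz, Matrix.single, Matrix.sub_apply, Matrix.of_apply]

lemma Db_X1 (j : Fin 5) : pD (FM im1 iz) (X (1, j)) = X (2, j) := by
  rw [pD_X, Fin.sum_univ_five]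
  simp [FM, EM, neg5, im1, iz, Matrix.single, Matrix.sub_apply, Matrix.of_apply]

lemma Db_X2 (j : Fin 5) : pD (FM im1 iz) (X (2, j)) = -X (3, j) := by
  rw [pD_X, Fin.sum_univ_five]
  simp [FM, EM, neg5, im1, iz, Matrix.single, Matrix.sub_apply, Matrix.of_apply]

lemma Db_X3 (j : Fin 5) : pD (FM im1 iz) (X (3, j)) = 0 := by
  rw [pD_X, Fin.sum_univ_five]
  simp [FM, EM, neg5, im1, iz, Matrix.single, Matrix.sub_apply, Matrix.of_apply]

lemma key_a (i : Fin 6) : (⇑(pD (FM im2 im1)))^[wa i + 1] (Ma i) = 0 := by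
  fin_cases i
  · show pD (FM im2 im1) (pD (FM im2 im1) (X (0, 0))) = 0
    rw [Da_X0, Da_X1]
  · show pD (FM im2 im1) (pD (FM im2 im1) (X (0, 1))) = 0
    rw [Da_X0, Da_X1]
  · show pD (FM im2 im1) (pD (FM im2 im1) (X (0, 3))) = 0
    rw [Da_X0, Da_X1]
  · show pD (FM im2 im1) (X (0, 0) * X (1, 1) - X (0, 1) * X (1, 0)) = 0
    simp only [Derivation.map_sub, Derivation.leibniz, Da_X0, Da_X1, smul_eq_mul]
    ring
  · show pD (FM im2 im1) (X (0, 0) * X (1, 3) - X (0, 3) * X (1, 0)) = 0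
    simp only [Derivation.map_sub, Derivation.leibniz, Da_X0, Da_X1, smul_eq_mul]
    ring
  · show pD (FM im2 im1) (X (0, 1) * X (1, 3) - X (0, 3) * X (1, 1)) = 0
    simp only [Derivation.map_sub, Derivation.leibniz, Da_X0, Da_X1, smul_eq_mul]
    ring

lemma key_b (i : Fin 6) : (⇑(pD (FM im1 iz)))^[wb i + 1] (Ma i) = 0 := by
  fin_cases i
  · show pD (FM im1 iz) (X (0, 0)) = 0
    rw [Db_X0]
  · show pD (FM im1 iz) (X (0, 1)) = 0
    rw [Db_X0]
  · show pD (FM im1 iz) (X (0, 3)) = 0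
    rw [Db_X0]
  · show pD (FM im1 iz) (pD (FM im1 iz) (pD (FM im1 iz)
        (X (0, 0) * X (1, 1) - X (0, 1) * X (1, 0)))) = 0
    simp only [Derivation.map_sub, Derivation.map_neg, Derivation.leibniz, Db_X0, Db_X1,
      Db_X2, Db_X3, smul_eq_mul, mul_zero, zero_mul, mul_neg, neg_mul,
      map_add, map_zero, sub_zero, zero_sub, add_zero, zero_add, neg_zero, neg_neg]
  · show pD (FM im1 iz) (pD (FM im1 iz) (pD (FM im1 iz)
        (X (0, 0) * X (1, 3) - X (0, 3) * X (1, 0)))) = 0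
    simp only [Derivation.map_sub, Derivation.map_neg, Derivation.leibniz, Db_X0, Db_X1,
      Db_X2, Db_X3, smul_eq_mul, mul_zero, zero_mul, mul_neg, neg_mul,
      map_add, map_zero, sub_zero, zero_sub, add_zero, zero_add, neg_zero, neg_neg]
  · show pD (FM im1 iz) (pD (FM im1 iz) (pD (FM im1 iz)
        (X (0, 1) * X (1, 3) - X (0, 3) * X (1, 1)))) = 0
    simp only [Derivation.map_sub, Derivation.map_neg, Derivation.leibniz, Db_X0, Db_X1,
      Db_X2, Db_X3, smul_eq_mul, mul_zero, zero_mul, mul_neg, neg_mul,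
      map_add, map_zero, sub_zero, zero_sub, add_zero, zero_add, neg_zero, neg_neg]

lemma nil_aeval (D : Derivation ℂ R5 R5) (w : Fin 6 → ℕ)
    (hw : ∀ i, (⇑D)^[w i + 1] (Ma i) = 0)
    (P : MvPolynomial (Fin 6) ℂ) (d : ℕ) (hd : ∀ m ∈ P.support, ∑ i, m i * w i = d) :
    (⇑D)^[d + 1] (MvPolynomial.aeval Ma P) = 0 := by
  conv_lhs => rw [P.as_sum, map_sum]
  apply nil_sum
  intro m hm
  rw [MvPolynomial.aeval_monomial, Finsupp.prod_fintype _ _ (fun i => pow_zero _)]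
  have hterm := nil_prod D Finset.univ (fun i => Ma i ^ m i) (fun i => m i * w i)
    (fun i _ => nil_pow D (hw i) (m i))
  have hC : (⇑D)^[0 + 1] (algebraMap ℂ R5 (MvPolynomial.coeff m P)) = 0 := by
    simpa using D.map_algebraMap (MvPolynomial.coeff m P)
  have hmul := nil_mul D _ 0 (∑ i, m i * w i) _ _ le_rfl hC hterm
  rw [hd m hm] at hmul
  simpa using hmul

lemma minors_eval (g : Mat5) (i : Fin 6) : minors i g = eval (ent g) (Ma i) := by
  fin_cases i
  · show aF im2 g = eval (ent g) (X (0, 0)); simp [aF, ent, im2]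
  · show aF im1 g = eval (ent g) (X (0, 1)); simp [aF, ent, im2, im1]
  · show aF ip1 g = eval (ent g) (X (0, 3)); simp [aF, ent, im2, ip1]
  · show aaF im2 im1 g = eval (ent g) (X (0, 0) * X (1, 1) - X (0, 1) * X (1, 0))
    simp [aaF, ent, im2, im1]
  · show aaF im2 ip1 g = eval (ent g) (X (0, 0) * X (1, 3) - X (0, 3) * X (1, 0))
    simp [aaF, ent, im2, im1, ip1]
  · show aaF im1 ip1 g = eval (ent g) (X (0, 1) * X (1, 3) - X (0, 3) * X (1, 1))
    simp [aaF, ent, im2, im1, ip1]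

lemma eval_comp (v : Fin 5 × Fin 5 → ℂ) (P : MvPolynomial (Fin 6) ℂ) :
    eval (fun i => eval v (Ma i)) P = eval v (MvPolynomial.aeval Ma P) := by
  induction P using MvPolynomial.induction_on with
  | C a => simp
  | add p q hp hq => simp [hp, hq]
  | mul_X p i hp => simp [hp]


/-- (a) If every monomial of `f` has total degree `d` in the order-one minors
`a_{−2}, a_{−1}, a_{1}`, then `L_{F_{−2,−1}}^{d+1} f = 0`.
(b) If every monomial of `f` has total degree `d'` in the order-two minors
`a_{−2,−1}, a_{−2,1}, a_{−1,1}`, then `L_{F_{−1,0}}^{2d'+1} f = 0`. -/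
theorem nilpotency_of_lowering_operators (P : MvPolynomial (Fin 6) ℂ) (f : Mat5 → ℂ)
    (hf : f = fun g => MvPolynomial.eval (fun i => minors i g) P) :
    (∀ d : ℕ, (∀ m ∈ P.support, m 0 + m 1 + m 2 = d) →
      (Lop (FM im2 im1))^[d + 1] f = 0) ∧
    (∀ d' : ℕ, (∀ m ∈ P.support, m 3 + m 4 + m 5 = d') →
      (Lop (FM im1 iz))^[2 * d' + 1] f = 0) := by
  have hf2 : f = fun g => eval (ent g) (MvPolynomial.aeval Ma P) := by
    rw [hf]; funext g
    rw [show (fun i => minors i g) = fun i => eval (ent g) (Ma i) from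
      funext (minors_eval g), eval_comp]
  constructor
  · intro d hd
    rw [hf2, Lop_iter_eval]
    have hz : (⇑(pD (FM im2 im1)))^[d + 1] (MvPolynomial.aeval Ma P) = 0 := by
      apply nil_aeval _ wa key_a
      intro m hm
      have h := hd m hm
      rw [Fin.sum_univ_six]
      show m 0 * 1 + m 1 * 1 + m 2 * 1 + m 3 * 0 + m 4 * 0 + m 5 * 0 = d
      omega
    rw [hz]
    funext g
    simp
  · intro d' hd
    rw [hf2, Lop_iter_eval]
    have hz : (⇑(pD (FM im1 iz)))^[2 * d' + 1] (MvPolynomial.aeval Ma P) = 0 := by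
      apply nil_aeval _ wb key_b
      intro m hm
      have h := hd m hm
      rw [Fin.sum_univ_six]
      show m 0 * 0 + m 1 * 0 + m 2 * 0 + m 3 * 2 + m 4 * 2 + m 5 * 2 = 2 * d'
      omega
    rw [hz]
    funext g
    simp
end
end

section
/- Fix integers m₋₂ ≥ m₋₁ ≥ 0. For each triple of integers (k₋₂, k₋₁, s₋₂) with m₋₂ ≥ k₋₂ ≥ m₋₁ ≥ k₋₁ ≥ 0 and k₋₂ ≥ s₋₂ ≥ k₋₁, let f_{k₋₂,k₋₁,s₋₂} = a_{1}^{m₋₂−k₋₂} · a_{−2,−1}^{k₋₁} · ∑_n [ a_{−2}^{s₋₂−m₋₁+n} a_{−1}^{k₋₂−s₋₂−n} a_{−2,1}^{m₋₁−k₋₁−n} a_{−1,1}^{n} ] / [ (s₋₂−m₋₁+n)! (k₋₂−s₋₂−n)! (m₋₁−k₋₁−n)! n! ], the sum over all n ∈ ℤ making all four exponents nonnegative. Then the family {f_{k₋₂,k₋₁,s₋₂}}, indexed by all such triples, is linearly independent in the space of polynomial functions on 5×5 complex matrices. -/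
noncomputable section

/-- The function
`f = a₁^{m₋₂−k₋₂} · a_{−2,−1}^{k₋₁} · ∑_n a_{−2}^{s₋₂−m₋₁+n} a_{−1}^{k₋₂−s₋₂−n}
a_{−2,1}^{m₋₁−k₋₁−n} a_{−1,1}^n / ((s₋₂−m₋₁+n)! (k₋₂−s₋₂−n)! (m₋₁−k₋₁−n)! n!)`,
the sum being over all `n ∈ ℤ` making all four exponents nonnegative. -/
def fdiag (m2 m1 k2 k1 s2 : ℤ) : Mat5 → ℂ := fun g =>
  (aF ip1 g) ^ (m2 - k2).toNat * (aaF im2 im1 g) ^ k1.toNat *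
    ∑ᶠ n : ℤ,
      if 0 ≤ s2 - m1 + n ∧ 0 ≤ k2 - s2 - n ∧ 0 ≤ m1 - k1 - n ∧ 0 ≤ n then
        ((aF im2 g) ^ (s2 - m1 + n).toNat * (aF im1 g) ^ (k2 - s2 - n).toNat *
            (aaF im2 ip1 g) ^ (m1 - k1 - n).toNat * (aaF im1 ip1 g) ^ n.toNat) /
          (((s2 - m1 + n).toNat.factorial * (k2 - s2 - n).toNat.factorial *
              (m1 - k1 - n).toNat.factorial * n.toNat.factorial : ℕ) : ℂ)
      else 0

open MvPolynomial

/-- the substitution curve -/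
def γv (v : Fin 4 → ℂ) : Mat5 :=
  Matrix.of ![![v 0, v 1, 0, 1, 0], ![-v 3, 0, 0, v 2, 0], 0, 0, 0]

/-- the admissibility condition for the summation index `n` -/
def cnd (m1 k2 k1 s2 n : ℤ) : Prop :=
  0 ≤ s2 - m1 + n ∧ 0 ≤ k2 - s2 - n ∧ 0 ≤ m1 - k1 - n ∧ 0 ≤ n

instance (m1 k2 k1 s2 n : ℤ) : Decidable (cnd m1 k2 k1 s2 n) := by
  unfold cnd; infer_instance

/-- the denominator -/
def den (m1 k2 k1 s2 n : ℤ) : ℕ :=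
  (s2 - m1 + n).toNat.factorial * (k2 - s2 - n).toNat.factorial *
    (m1 - k1 - n).toNat.factorial * n.toNat.factorial

/-- the polynomial model of `fdiag ∘ γv` -/
def Pm (m1 k2 k1 s2 : ℤ) : MvPolynomial (Fin 4) ℂ :=
  ∑ n ∈ Finset.Icc (0 : ℤ) m1,
    if cnd m1 k2 k1 s2 n then
      ((den m1 k2 k1 s2 n : ℂ))⁻¹ •
        ((X 1 * X 3) ^ k1.toNat * X 0 ^ (s2 - m1 + n).toNat * X 1 ^ (k2 - s2 - n).toNat *
          (X 0 * X 2 + X 3) ^ (m1 - k1 - n).toNat * (X 1 * X 2) ^ n.toNat)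
    else 0

lemma fdiag_γv (m2 m1 k2 k1 s2 : ℤ) (hk1 : 0 ≤ k1) (v : Fin 4 → ℂ) :
    fdiag m2 m1 k2 k1 s2 (γv v) = MvPolynomial.eval v (Pm m1 k2 k1 s2) := by
  have h1 : aF im2 (γv v) = v 0 := by simp [aF, γv, im2, im1]
  have h2 : aF im1 (γv v) = v 1 := by simp [aF, γv, im2, im1]
  have h3 : aF ip1 (γv v) = 1 := by simp [aF, γv, im2, im1, ip1]
  have h4 : aaF im2 im1 (γv v) = v 1 * v 3 := by simp [aaF, γv, im2, im1]
  have h5 : aaF im2 ip1 (γv v) = v 0 * v 2 + v 3 := by simp [aaF, γv, im2, im1, ip1]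
  have h6 : aaF im1 ip1 (γv v) = v 1 * v 2 := by simp [aaF, γv, im2, im1, ip1]
  unfold fdiag Pm
  rw [h1, h2, h3, h4, h5, h6]
  simp only [cnd, den]
  rw [finsum_eq_sum_of_support_subset _
    (s := Finset.Icc (0 : ℤ) m1) (by
      intro n hn
      rw [Function.mem_support] at hn
      simp only [Finset.coe_Icc, Set.mem_Icc]
      by_contra hcon
      apply hn
      rw [if_neg]
      intro ⟨c1, c2, c3, c4⟩
      omega)]
  rw [map_sum, Finset.mul_sum]
  refine Finset.sum_congr rfl fun n hn => ?_
  by_cases hc : 0 ≤ s2 - m1 + n ∧ 0 ≤ k2 - s2 - n ∧ 0 ≤ m1 - k1 - n ∧ 0 ≤ n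
  · rw [if_pos hc]; erw [if_pos hc, smul_eval]
    simp only [map_mul, map_pow, map_add, eval_X, one_pow, smul_eq_mul]
    rw [div_eq_mul_inv]
    ring
  · rw [if_neg hc]; erw [if_neg hc, map_zero, mul_zero]

def expo (a b c d : ℕ) : Fin 4 →₀ ℕ :=
  Finsupp.single 0 a + Finsupp.single 1 b + Finsupp.single 2 c + Finsupp.single 3 d

lemma expo_eq_iff {a b c d a' b' c' d' : ℕ} :
    expo a b c d = expo a' b' c' d' ↔ a = a' ∧ b = b' ∧ c = c' ∧ d = d' := by
  constructor
  · intro h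
    refine ⟨?_, ?_, ?_, ?_⟩
    · have := DFunLike.congr_fun h 0; simpa [expo, Finsupp.single_apply] using this
    · have := DFunLike.congr_fun h 1; simpa [expo, Finsupp.single_apply] using this
    · have := DFunLike.congr_fun h 2; simpa [expo, Finsupp.single_apply] using this
    · have := DFunLike.congr_fun h 3; simpa [expo, Finsupp.single_apply] using this
  · rintro ⟨rfl, rfl, rfl, rfl⟩; rfl

lemma term_eq_sum_monomial (a b c k n : ℕ) :
    ((X 1 * X 3 : MvPolynomial (Fin 4) ℂ) ^ a * X 0 ^ b * X 1 ^ c *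
      (X 0 * X 2 + X 3) ^ k * (X 1 * X 2) ^ n)
    = ∑ j ∈ Finset.range (k + 1),
        monomial (expo (b + j) (a + c + n) (j + n) (a + (k - j))) ((k.choose j : ℂ)) := by
  rw [add_pow, Finset.mul_sum, Finset.sum_mul]
  refine Finset.sum_congr rfl fun j hj => ?_
  have : ((k.choose j : ℕ) : MvPolynomial (Fin 4) ℂ) = monomial 0 ((k.choose j : ℂ)) := by
    simp [MvPolynomial.monomial_zero', map_natCast]
  rw [this]
  simp only [mul_pow, X_pow_eq_monomial, monomial_mul]
  congr 1
  · simp only [expo, Finsupp.single_add]; abel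
  · ring

/-- the target monomial for the triple `(k2, k1, s2)` -/
def Mi (m1 k2 k1 s2 : ℤ) : Fin 4 →₀ ℕ :=
  expo (s2 - k1).toNat (k2 - s2 + k1).toNat (m1 - k1).toNat k1.toNat

/-- coefficient of the target monomial of `i` in `Pm` of a different triple vanishes -/
lemma coeff_Pm_ne (m1 k2 k1 s2 k2' k1' s2' : ℤ)
    (hA : m1 ≤ k2 ∧ k1 ≤ m1 ∧ 0 ≤ k1 ∧ s2 ≤ k2 ∧ k1 ≤ s2)
    (hB : m1 ≤ k2' ∧ k1' ≤ m1 ∧ 0 ≤ k1' ∧ s2' ≤ k2' ∧ k1' ≤ s2')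
    (hge : ¬ k1' < k1) (hne : ¬ (k2' = k2 ∧ k1' = k1 ∧ s2' = s2)) :
    MvPolynomial.coeff (Mi m1 k2 k1 s2) (Pm m1 k2' k1' s2') = 0 := by
  rw [Pm, MvPolynomial.coeff_sum]
  refine Finset.sum_eq_zero fun n hn => ?_
  by_cases hc : cnd m1 k2' k1' s2' n
  · rw [if_pos hc, MvPolynomial.coeff_smul, term_eq_sum_monomial, MvPolynomial.coeff_sum]
    rw [Finset.sum_eq_zero, smul_zero]
    intro j hj
    rw [Finset.mem_range] at hj
    rw [coeff_monomial, if_neg]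
    rw [Mi]
    intro heq
    rw [expo_eq_iff] at heq
    obtain ⟨e1, e2, e3, e4⟩ := heq
    obtain ⟨c1, c2, c3, c4⟩ := hc
    omega
  · rw [if_neg hc, MvPolynomial.coeff_zero]

/-- coefficient of the target monomial of `i` in `Pm i` -/
lemma coeff_Pm_self (m1 k2 k1 s2 : ℤ)
    (hA : m1 ≤ k2 ∧ k1 ≤ m1 ∧ 0 ≤ k1 ∧ s2 ≤ k2 ∧ k1 ≤ s2) :
    MvPolynomial.coeff (Mi m1 k2 k1 s2) (Pm m1 k2 k1 s2) =
      ∑ n ∈ Finset.Icc (0 : ℤ) m1,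
        if cnd m1 k2 k1 s2 n then ((den m1 k2 k1 s2 n : ℂ))⁻¹ else 0 := by
  rw [Pm, MvPolynomial.coeff_sum]
  refine Finset.sum_congr rfl fun n hn => ?_
  by_cases hc : cnd m1 k2 k1 s2 n
  · rw [if_pos hc, if_pos hc, MvPolynomial.coeff_smul, term_eq_sum_monomial,
      MvPolynomial.coeff_sum]
    obtain ⟨c1, c2, c3, c4⟩ := hc
    rw [Finset.sum_eq_single_of_mem (m1 - k1 - n).toNat (by
      rw [Finset.mem_range]; omega)]
    · rw [coeff_monomial, if_pos, Nat.choose_self, Nat.cast_one, smul_eq_mul, mul_one]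
      rw [Mi, expo_eq_iff]
      refine ⟨by omega, by omega, by omega, by omega⟩
    · intro j hj hjne
      rw [Finset.mem_range] at hj
      rw [coeff_monomial, if_neg]
      rw [Mi]
      intro heq
      rw [expo_eq_iff] at heq
      obtain ⟨e1, e2, e3, e4⟩ := heq
      omega
  · rw [if_neg hc, if_neg hc, MvPolynomial.coeff_zero]

lemma den_pos (m1 k2 k1 s2 n : ℤ) : 0 < den m1 k2 k1 s2 n := by
  refine Nat.mul_pos (Nat.mul_pos (Nat.mul_pos ?_ ?_) ?_) ?_ <;> exact Nat.factorial_pos _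

lemma coeff_Pm_self_ne_zero (m1 k2 k1 s2 : ℤ)
    (hA : m1 ≤ k2 ∧ k1 ≤ m1 ∧ 0 ≤ k1 ∧ s2 ≤ k2 ∧ k1 ≤ s2) :
    MvPolynomial.coeff (Mi m1 k2 k1 s2) (Pm m1 k2 k1 s2) ≠ 0 := by
  rw [coeff_Pm_self m1 k2 k1 s2 hA]
  have hre : (∑ n ∈ Finset.Icc (0 : ℤ) m1,
      if cnd m1 k2 k1 s2 n then ((den m1 k2 k1 s2 n : ℂ))⁻¹ else 0)
      = ((∑ n ∈ Finset.Icc (0 : ℤ) m1,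
      if cnd m1 k2 k1 s2 n then ((den m1 k2 k1 s2 n : ℝ))⁻¹ else 0 : ℝ) : ℂ) := by
    push_cast
    refine Finset.sum_congr rfl fun n hn => ?_
    split_ifs <;> simp
  rw [hre, Complex.ofReal_ne_zero]
  have key : ∀ n0 : ℤ, n0 ∈ Finset.Icc (0 : ℤ) m1 → cnd m1 k2 k1 s2 n0 →
      (0 : ℝ) < ∑ n ∈ Finset.Icc (0 : ℤ) m1,
        if cnd m1 k2 k1 s2 n then ((den m1 k2 k1 s2 n : ℝ))⁻¹ else 0 := by
    intro n0 hmem hcnd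
    refine Finset.sum_pos' (fun n hn => ?_) ⟨n0, hmem, ?_⟩
    · split_ifs
      · positivity
      · exact le_refl 0
    · rw [if_pos hcnd]
      have hd : (0 : ℝ) < (den m1 k2 k1 s2 n0 : ℝ) := by
        exact_mod_cast den_pos m1 k2 k1 s2 n0
      positivity
  obtain ⟨h1, h2, h3, h4, h5⟩ := hA
  by_cases hms : m1 ≤ s2
  · exact ne_of_gt (key 0 (by rw [Finset.mem_Icc]; omega)
      ⟨by omega, by omega, by omega, by omega⟩)
  · exact ne_of_gt (key (m1 - s2) (by rw [Finset.mem_Icc]; omega)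
      ⟨by omega, by omega, by omega, by omega⟩)

/-- evaluation as a linear map into functions -/
def evalLM : MvPolynomial (Fin 4) ℂ →ₗ[ℂ] ((Fin 4 → ℂ) → ℂ) where
  toFun p := fun v => MvPolynomial.eval v p
  map_add' p q := funext fun v => by simp
  map_smul' c p := funext fun v => by simp [MvPolynomial.smul_eval]

lemma evalLM_ker : LinearMap.ker evalLM = ⊥ := by
  rw [LinearMap.ker_eq_bot]
  intro p q hpq
  exact MvPolynomial.funext fun x => congrFun hpq x

/-- The family of functions `f_{k₋₂,k₋₁,s₋₂}` corresponding to the `𝔬₃`-highest diagrams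
with fixed top row `[m₋₂, m₋₁]`, indexed by the admissible triples `(k₋₂, k₋₁, s₋₂)`,
is linearly independent in the space of functions on `5×5` complex matrices. -/
theorem highest_o3_vectors_linearIndependent (m2 m1 : ℤ) (h : m1 ≤ m2) (h0 : 0 ≤ m1) :
    LinearIndependent ℂ
      (fun t : {t : ℤ × ℤ × ℤ //
          t.1 ≤ m2 ∧ m1 ≤ t.1 ∧ t.2.1 ≤ m1 ∧ 0 ≤ t.2.1 ∧ t.2.2 ≤ t.1 ∧ t.2.1 ≤ t.2.2} =>
        fdiag m2 m1 t.1.1 t.1.2.1 t.1.2.2) := by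
  classical
  apply LinearIndependent.of_comp (LinearMap.funLeft ℂ ℂ γv)
  have heq : (⇑(LinearMap.funLeft ℂ ℂ γv) ∘ fun t : {t : ℤ × ℤ × ℤ //
          t.1 ≤ m2 ∧ m1 ≤ t.1 ∧ t.2.1 ≤ m1 ∧ 0 ≤ t.2.1 ∧ t.2.2 ≤ t.1 ∧ t.2.1 ≤ t.2.2} =>
        fdiag m2 m1 t.1.1 t.1.2.1 t.1.2.2)
      = ⇑evalLM ∘ (fun t : {t : ℤ × ℤ × ℤ //
          t.1 ≤ m2 ∧ m1 ≤ t.1 ∧ t.2.1 ≤ m1 ∧ 0 ≤ t.2.1 ∧ t.2.2 ≤ t.1 ∧ t.2.1 ≤ t.2.2} =>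
        Pm m1 t.1.1 t.1.2.1 t.1.2.2) := by
    funext t
    funext v
    exact fdiag_γv m2 m1 t.1.1 t.1.2.1 t.1.2.2 t.2.2.2.2.1 v
  rw [heq]
  refine LinearIndependent.map' ?_ evalLM evalLM_ker
  rw [linearIndependent_iff']
  intro s g hsum i hi
  have H : ∀ K : ℕ, ∀ i ∈ s, (i.1.2.1).toNat = K → g i = 0 := by
    intro K
    induction K using Nat.strong_induction_on with
    | _ K ih =>
      intro i hi hK
      obtain ⟨ha1, ha2, ha3, ha4, ha5, ha6⟩ := i.2
      have hco := congrArg (MvPolynomial.coeff (Mi m1 i.1.1 i.1.2.1 i.1.2.2)) hsum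
      rw [MvPolynomial.coeff_sum] at hco
      simp only [MvPolynomial.coeff_smul, smul_eq_mul, MvPolynomial.coeff_zero] at hco
      rw [Finset.sum_eq_single_of_mem i hi] at hco
      · have hcoeff := coeff_Pm_self_ne_zero m1 i.1.1 i.1.2.1 i.1.2.2
          ⟨ha2, ha3, ha4, ha5, ha6⟩
        exact (mul_eq_zero.mp hco).resolve_right hcoeff
      · intro j hj hne
        obtain ⟨hb1, hb2, hb3, hb4, hb5, hb6⟩ := j.2
        by_cases hlt : (j.1.2.1).toNat < K
        · rw [ih _ hlt j hj rfl, zero_mul]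
        · rw [coeff_Pm_ne m1 i.1.1 i.1.2.1 i.1.2.2 j.1.1 j.1.2.1 j.1.2.2
            ⟨ha2, ha3, ha4, ha5, ha6⟩ ⟨hb2, hb3, hb4, hb5, hb6⟩ (by omega) ?_, mul_zero]
          intro ⟨e1, e2, e3⟩
          exact hne (Subtype.ext (by
            ext
            · exact e1
            · exact e2
            · exact e3))
  exact H _ i hi rfl
end
end

section
/- Let m₋₂ ≥ m₋₁ ≥ 0 be integers with m₋₁ ≥ 1, and consider the polynomial function v₀(g) = a_{−2}(g)^{m₋₂−m₋₁} a_{−2,−1}(g)^{m₋₁} on 5×5 complex matrices. Restricted to matrices g with gᵀ S g = S, the second application of the lowering operator satisfies: D_{F_{0,−1}}² (a_{−2,−1}^{m₋₁}) (g) = m₋₁ (m₋₁ − 1) a_{−2,−1}(g)^{m₋₁−2} a_{−2,0}(g)² − m₋₁ a_{−2,−1}(g)^{m₋₁−1} a_{−2,1}(g) = −(2m₋₁² − m₋₁) a_{−2,−1}(g)^{m₋₁−1} a_{−2,1}(g), the second equality holding because a_{−2,0}(g)² = −2 a_{−2,−1}(g) a_{−2,1}(g) for all g with gᵀ S g = S.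 -/
noncomputable section

lemma keyA (g : Mat5) (t : ℂ) :
    aaF im2 im1 (g + t • (g * FM iz im1)) = aaF im2 im1 g + t * aaF im2 iz g := by
  simp [aaF, im2, im1, iz, FM, EM, neg5, Matrix.add_apply, Matrix.smul_apply,
    Matrix.mul_apply, Matrix.sub_apply, Matrix.single, Fin.sum_univ_five]
  ring

lemma keyB (g : Mat5) (t : ℂ) :
    aaF im2 iz (g + t • (g * FM iz im1)) = aaF im2 iz g - t * aaF im2 ip1 g := by
  simp [aaF, im2, im1, iz, ip1, FM, EM, neg5, Matrix.add_apply, Matrix.smul_apply,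
    Matrix.mul_apply, Matrix.sub_apply, Matrix.single, Fin.sum_univ_five]
  ring

lemma hS2 : SM * SM = 1 := by
  ext i j
  fin_cases i <;> fin_cases j <;>
    simp [SM, neg5, Matrix.mul_apply, Fin.sum_univ_five, Matrix.one_apply]

lemma hsym (g : Mat5) (hg : g.transpose * SM * g = SM) : g * SM * g.transpose = SM := by
  have hleft : (SM * g.transpose * SM) * g = 1 := by
    calc (SM * g.transpose * SM) * g = SM * (g.transpose * SM * g) := by
          simp [Matrix.mul_assoc]
      _ = 1 := by rw [hg, hS2]
  have hright : g * (SM * g.transpose * SM) = 1 := mul_eq_one_comm.mp hleft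
  calc g * SM * g.transpose = g * SM * g.transpose * (SM * SM) := by rw [hS2]; simp
    _ = (g * (SM * g.transpose * SM)) * SM := by simp [Matrix.mul_assoc]
    _ = SM := by rw [hright]; simp

lemma quadric (g : Mat5) (hg : g.transpose * SM * g = SM) :
    aaF im2 iz g ^ 2 = -2 * aaF im2 im1 g * aaF im2 ip1 g := by
  have h := hsym g hg
  have r1 := congrFun (congrFun h 0) 0
  have r2 := congrFun (congrFun h 0) 1
  have r3 := congrFun (congrFun h 1) 1
  simp [SM, neg5, Matrix.mul_apply, Matrix.transpose_apply, Fin.sum_univ_five] at r1 r2 r3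
  simp only [aaF, im2, im1, iz, ip1]
  linear_combination (g 1 0)^2 * r1 + (-2 * g 0 0 * g 1 0) * r2 + (g 0 0)^2 * r3

lemma Dop1 (m1 : ℕ) :
    Dop (FM iz im1) (fun g => (aaF im2 im1 g) ^ m1) =
      fun g1 => (m1 : ℂ) * (aaF im2 im1 g1) ^ (m1 - 1) * aaF im2 iz g1 := by
  funext g1
  unfold Dop
  have he : (fun t : ℂ => (aaF im2 im1 (g1 + t • (g1 * FM iz im1))) ^ m1)
      = fun t => (aaF im2 im1 g1 + t * aaF im2 iz g1) ^ m1 := by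
    funext t; rw [keyA]
  rw [he]
  have h0 : HasDerivAt (fun t : ℂ => aaF im2 im1 g1 + t * aaF im2 iz g1) (aaF im2 iz g1) 0 := by
    simpa using ((hasDerivAt_id (0:ℂ)).mul_const (aaF im2 iz g1)).const_add (aaF im2 im1 g1)
  have hd := h0.pow m1
  rw [show (fun t : ℂ => (aaF im2 im1 g1 + t * aaF im2 iz g1) ^ m1) = (fun t : ℂ => aaF im2 im1 g1 + t * aaF im2 iz g1) ^ m1 from rfl, hd.deriv]
  ring_nf

lemma Dop2 (m1 : ℕ) (hm1 : 1 ≤ m1) (g : Mat5) :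
    Dop (FM iz im1) (Dop (FM iz im1) (fun g => (aaF im2 im1 g) ^ m1)) g =
      (m1 : ℂ) * ((m1 : ℂ) - 1) * (aaF im2 im1 g) ^ (m1 - 2) * (aaF im2 iz g) ^ 2 -
        (m1 : ℂ) * (aaF im2 im1 g) ^ (m1 - 1) * aaF im2 ip1 g := by
  rw [Dop1]
  unfold Dop
  have he : (fun t : ℂ => (m1 : ℂ) * (aaF im2 im1 (g + t • (g * FM iz im1))) ^ (m1 - 1)
        * aaF im2 iz (g + t • (g * FM iz im1)))
      = fun t => (m1 : ℂ) * (aaF im2 im1 g + t * aaF im2 iz g) ^ (m1 - 1)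
        * (aaF im2 iz g - t * aaF im2 ip1 g) := by
    funext t; rw [keyA, keyB]
  rw [he]
  set A := aaF im2 im1 g
  set B := aaF im2 iz g
  set C := aaF im2 ip1 g
  have h0 : HasDerivAt (fun t : ℂ => A + t * B) B 0 := by
    simpa using ((hasDerivAt_id (0:ℂ)).mul_const B).const_add A
  have h1 := (h0.pow (m1 - 1)).const_mul ((m1 : ℂ))
  have h2 : HasDerivAt (fun t : ℂ => B - t * C) (-C) 0 := by
    simpa using ((hasDerivAt_id (0:ℂ)).mul_const C).const_sub B
  have h3 := h1.mul h2
  rw [show (fun t : ℂ => (m1 : ℂ) * (A + t * B) ^ (m1 - 1) * (B - t * C)) = ((fun y => (m1 : ℂ) * ((fun t : ℂ => A + t * B) ^ (m1 - 1)) y) * fun t : ℂ => B - t * C) from rfl, h3.deriv]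
  simp only [Pi.pow_apply]
  have hc : ((m1 - 1 : ℕ) : ℂ) = (m1 : ℂ) - 1 := by
    have := Nat.cast_sub (R := ℂ) hm1; simpa using this
  have h12 : m1 - 1 - 1 = m1 - 2 := by omega
  rw [h12, hc]
  ring

/-- On the orthogonal group `{g : gᵀ S g = S}` one has
`D_{F_{0,−1}}²(a_{−2,−1}^{m₋₁}) = m₋₁(m₋₁−1) a_{−2,−1}^{m₋₁−2} a_{−2,0}²
  − m₋₁ a_{−2,−1}^{m₋₁−1} a_{−2,1} = −(2m₋₁² − m₋₁) a_{−2,−1}^{m₋₁−1} a_{−2,1}`,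
the second equality because `a_{−2,0}² = −2 a_{−2,−1} a_{−2,1}` on the orthogonal group. -/
theorem second_lowering_of_highest (m2 m1 : ℕ) (h21 : m1 ≤ m2) (h1 : 1 ≤ m1)
    (f : Mat5 → ℂ) (hf : f = fun g => (aaF im2 im1 g) ^ m1)
    (g : Mat5) (hg : g.transpose * SM * g = SM) :
    Dop (FM iz im1) (Dop (FM iz im1) f) g =
        (m1 : ℂ) * ((m1 : ℂ) - 1) * (aaF im2 im1 g) ^ (m1 - 2) * (aaF im2 iz g) ^ 2 -
          (m1 : ℂ) * (aaF im2 im1 g) ^ (m1 - 1) * aaF im2 ip1 g ∧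
      (m1 : ℂ) * ((m1 : ℂ) - 1) * (aaF im2 im1 g) ^ (m1 - 2) * (aaF im2 iz g) ^ 2 -
          (m1 : ℂ) * (aaF im2 im1 g) ^ (m1 - 1) * aaF im2 ip1 g =
        -(2 * (m1 : ℂ) ^ 2 - (m1 : ℂ)) * (aaF im2 im1 g) ^ (m1 - 1) * aaF im2 ip1 g ∧
      aaF im2 iz g ^ 2 = -2 * aaF im2 im1 g * aaF im2 ip1 g := by
  have hq := quadric g hg
  refine ⟨?_, ?_, hq⟩
  · subst hf; exact Dop2 m1 h1 g
  · rcases eq_or_lt_of_le h1 with h | h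
    · simp only [← h]
      norm_num
    · have h2 : 2 ≤ m1 := h
      have hps : m1 - 1 = (m1 - 2) + 1 := by omega
      rw [hps, pow_succ]
      linear_combination (m1 : ℂ) * ((m1 : ℂ) - 1) * (aaF im2 im1 g) ^ (m1 - 2) * hq
end
end
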